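/- arXiv:2006.12324 — 7 statements merged into one kernel-verified Lean document; each statement's English description precedes it below -/
import Mathlib

section
/- Consider labeled chip-firing on ℤ with 2m chips (m ≥ 1), bijectively labeled by {−m,…,−1,1,…,m}, all initially at site 0, and any complete firing sequence. Then for all integers x, y with 0 ≤ x ≤ m−1 and 0 ≤ y ≤ m−1: (1) firing move (x,y) occurs with exactly 2 chips present at site x−y; and (2) firing move (x,y) occurs after firing move (x+1,y) whenever firing move (x+1,y) exists, and firing move (x,y) occurs after firing move (x,y+1) whenever firing move (x,y+1) exists. -/
/-- A labeled chip-firing move at site `i`: two distinct chips `a, b` at a common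
site `i` with `label a < label b` are chosen; `a` moves to `i - 1` and `b` moves
to `i + 1`; all other chips stay put. -/
def LMove {ι : Type} (label : ι → ℤ) (c c' : ι → ℤ) (i : ℤ) : Prop :=
  ∃ a b : ι, a ≠ b ∧ label a < label b ∧ c a = i ∧ c b = i ∧
    c' a = i - 1 ∧ c' b = i + 1 ∧ ∀ x : ι, x ≠ a → x ≠ b → c' x = c x

/-- `u` is the time of the `j`-th-from-last firing at site `s` in a firing
sequence of length `T` whose fired sites are recorded by `site`. -/
def JthLastFiring (site : ℕ → ℤ) (T : ℕ) (s : ℤ) (j : ℕ) (u : ℕ) : Prop :=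
  u < T ∧ site u = s ∧
    ((Finset.Ico (u + 1) T).filter (fun v => site v = s)).card = j - 1

/-- The chips: one chip for each label in `{-m, …, -1, 1, …, m}`. -/
abbrev Chips (m : ℕ) := {k : ℤ // k ∈ (Finset.Icc (-(m : ℤ)) m).erase 0}

/-!
Labels play no role. Under a firing at `i`, every moment `∑ φ (position)` of the chips changes by
the second difference of `φ` at `i`. For indicator functions this is a discrete Laplace relation
between chip counts and firing counts; for `φ = id` it says that the positions always sum to `0`.
A site at which `tri (m - |t|) = 1 + ⋯ + (m - |t|)` firings have happened holds at most one chip,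
so no site fires more often. Hence no chip passes `±m`, the `2m` distinct final positions, summing
to `0`, fill `[-m, m] \ {0}`, and site `t` fires exactly `tri (m - |t|)` times.

Let `r t` be the number of firings at `t` still to come. Read backwards in time, `r` starts from
`tri (m - |t|)`, and every firing, which needs two chips, preserves `GridInvariant r`. At the firing
move `(x, y)` with `x ≥ y`, the site `s = x - y` has `r s = y + 1`, and the invariant bounds
`r (s - 1)` and `r (s + 1)` from below so tightly that the Laplace relation
`#chips at s = 1 + 2 r s - r (s - 1) - r (s + 1)` (with `0` for `1` at the origin) and
`#chips at s ≥ 2` force equality everywhere. This gives the two chips and the number of firings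
still to come at `s ± 1`, that is, the order of the moves. The case `x < y` is the mirror image.
-/

open Finset

namespace ChipFiring

noncomputable def tri (k : ℤ) : ℤ := ∑ i ∈ Icc 1 k, i

theorem tri_of_nonpos {k : ℤ} (hk : k ≤ 0) : tri k = 0 :=
  sum_eq_zero fun i hi => by simp at hi; omega

theorem tri_nonneg (k : ℤ) : 0 ≤ tri k :=
  sum_nonneg fun i hi => by simp at hi; omega

theorem tri_mono : Monotone tri := fun _ _ hab =>
  sum_le_sum_of_subset_of_nonneg (Icc_subset_Icc_right hab) fun i hi _ => by simp at hi; omega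

theorem tri_add_one {k : ℤ} (hk : 0 ≤ k) : tri (k + 1) = tri k + (k + 1) := by
  rw [tri, ← insert_Icc_right_eq_Icc_add_one (by omega), sum_insert (by simp), add_comm, tri]

theorem tri_sub_tri_sub_one (k : ℤ) : tri k - tri (k - 1) = max k 0 := by
  rcases le_or_gt k 0 with hk | hk
  · rw [tri_of_nonpos hk, tri_of_nonpos (by omega)]
    omega
  · have := tri_add_one (k := k - 1) (by omega)
    rw [sub_add_cancel] at this
    omega

theorem tri_pos {k : ℤ} (hk : 0 < k) : 0 < tri k := by
  have := tri_sub_tri_sub_one k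
  have := tri_nonneg (k - 1)
  omega

theorem tri_add_one_add_tri_sub_one_le (k : ℤ) : tri (k + 1) + tri (k - 1) ≤ 2 * tri k + 1 := by
  have h₁ := tri_sub_tri_sub_one (k + 1)
  have h₂ := tri_sub_tri_sub_one k
  rw [add_sub_cancel_right] at h₁
  omega

/-- With `2m` chips at the origin, a site that has fired `tri (m - |i|)` times while its neighbours
have not exceeded their bounds holds at most one chip. -/
theorem tri_laplacian_le {m : ℤ} (hm : 0 ≤ m) (i : ℤ) :
    (if i = 0 then 2 * m else 0) + tri (m - |i - 1|) + tri (m - |i + 1|) ≤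
      2 * tri (m - |i|) + 1 := by
  rcases lt_trichotomy i 0 with hi | rfl | hi
  · rw [if_neg hi.ne, abs_of_neg (by omega : i - 1 < 0), abs_of_nonpos (by omega : i + 1 ≤ 0),
      abs_of_neg hi, show m - -(i - 1) = m + i - 1 by ring, show m - -(i + 1) = m + i + 1 by ring,
      show m - -i = m + i by ring]
    have := tri_add_one_add_tri_sub_one_le (m + i)
    omega
  · simp only [if_true, zero_sub, zero_add, abs_neg, abs_one, abs_zero, sub_zero]
    have := tri_sub_tri_sub_one m
    omega
  · rw [if_neg hi.ne', abs_of_nonneg (by omega : 0 ≤ i - 1), abs_of_pos (by omega : 0 < i + 1),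
      abs_of_pos hi, show m - (i - 1) = m - i + 1 by ring, show m - (i + 1) = m - i - 1 by ring]
    have := tri_add_one_add_tri_sub_one_le (m - i)
    omega

theorem tri_sub_tri_sub_le {k j : ℤ} (hj : 0 ≤ j) :
    tri k - tri (k - j) - j ≤ tri (k - 1) - tri (k - 1 - j) := by
  have h₁ := tri_sub_tri_sub_one k
  have h₂ := tri_sub_tri_sub_one (k - j)
  rw [sub_right_comm] at h₂
  omega

theorem le_tri_sub_tri_sub_one {x k a : ℤ} (h₁ : x ≤ tri k) (h₂ : x ≤ tri k - tri a + 1) :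
    x ≤ tri k - tri (a - 1) := by
  rcases le_or_gt a 0 with ha | ha
  · rwa [tri_of_nonpos (by omega : a - 1 ≤ 0), sub_zero]
  · have := tri_sub_tri_sub_one a
    omega

theorem sum_max_sub_erase_zero {m t : ℤ} (ht : 0 ≤ t) :
    ∑ v ∈ (Icc (-m) m).erase 0, max (v - t) 0 = tri (m - t) := by
  symm
  refine sum_bij_ne_zero (fun w _ _ => w + t) (fun w hw _ => ?_) (fun _ _ _ _ _ _ h => by omega)
    (fun v hv hv0 => ⟨v - t, ?_, ?_, by ring⟩) (fun w hw _ => ?_)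
  · simp only [mem_Icc, mem_erase] at hw ⊢
    omega
  · simp only [mem_Icc, mem_erase] at hv ⊢
    omega
  · omega
  · simp only [mem_Icc] at hw
    omega

theorem sum_Icc_neg_self_eq_zero (m : ℤ) : ∑ v ∈ Icc (-m) m, v = 0 := by
  have : ∑ v ∈ Icc (-m) m, v = ∑ v ∈ Icc (-m) m, -v :=
    sum_nbij' Neg.neg Neg.neg (fun v hv => by simp at hv ⊢; omega)
      (fun v hv => by simp at hv ⊢; omega) (fun v _ => neg_neg v) (fun v _ => neg_neg v)
      (fun v _ => (neg_neg v).symm)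
  rw [sum_neg_distrib] at this
  omega

/-- For the numbers `f t` of firings at `t` still to come; `tri k - tri (k - j)` is
`k + (k - 1) + ⋯ + (k - j + 1)`. The grid structure needs only `j = 1`; the other `j` make the
invariant survive a firing. -/
structure GridInvariant (m : ℤ) (f : ℤ → ℤ) : Prop where
  drop_le : ∀ t j, 0 ≤ t → 1 ≤ j → f t ≤ tri (m - t) - tri (m - t - j) → f t - f (t + 1) ≤ j
  rise_lt : ∀ t j, 1 ≤ t → 1 ≤ j → f t ≤ tri m - tri (m - j) → f t - f (t - 1) < j

theorem gridInvariant_tri (m : ℤ) : GridInvariant m (fun t => tri (m - |t|)) where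
  drop_le t j ht hj hf := by
    simp only [abs_of_nonneg ht, abs_of_nonneg (by omega : 0 ≤ t + 1)] at hf ⊢
    have hmtj : m - t - j ≤ 0 := by
      by_contra h
      linarith [tri_pos (not_le.mp h)]
    have := tri_sub_tri_sub_one (m - t)
    rw [sub_sub m t 1] at this
    omega
  rise_lt t j ht hj _ := by
    simp only [abs_of_nonneg (by omega : 0 ≤ t), abs_of_nonneg (by omega : 0 ≤ t - 1)]
    have := tri_mono (by omega : m - t ≤ m - (t - 1))
    omega

/-- `hfire` says that two chips sit at `i` when it fires, given that in the final configuration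
every site holds at most one chip and the origin none. -/
theorem GridInvariant.of_fire {m i : ℤ} {f g : ℤ → ℤ} (hf : GridInvariant m f)
    (hf' : GridInvariant m (fun t => f (-t))) (hcap : ∀ t, f t ≤ tri (m - |t|))
    (hfire : 2 ≤ (if i = 0 then 0 else 1) + 2 * f i - f (i - 1) - f (i + 1))
    (hfg : ∀ t, f t = g t + if i = t then 1 else 0) : GridInvariant m g where
  drop_le t j ht hj hg := by
    have e₀ := hfg t
    have e₁ := hfg (t + 1)
    by_cases hit : i = t
    · rw [if_pos hit] at e₀
      rw [if_neg (by omega), add_zero] at e₁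
      have hcapt := hcap t
      rw [abs_of_nonneg ht] at hcapt
      have := hf.drop_le t (j + 1) ht (by omega)
        (by rw [← sub_sub]; exact le_tri_sub_tri_sub_one hcapt (by omega))
      omega
    rw [if_neg hit, add_zero] at e₀
    by_cases hit' : i = t + 1
    · rw [if_pos hit'] at e₁
      subst hit'
      rw [if_neg (by omega), add_sub_cancel_right] at hfire
      have h₁ := hf.drop_le t j ht hj (by omega)
      by_contra! h
      -- then `f t - f (t + 1) = j`, and the firing at `t + 1` needs a drop of `j + 1` to its right
      have := tri_sub_tri_sub_le (k := m - t) (j := j) (by omega)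
      have h₂ := hf.drop_le (t + 1) j (by omega) hj (by rw [← sub_sub]; omega)
      omega
    · rw [if_neg hit', add_zero] at e₁
      have := hf.drop_le t j ht hj (by omega)
      omega
  rise_lt t j ht hj hg := by
    have e₀ := hfg t
    have e₁ := hfg (t - 1)
    by_cases hit : i = t
    · rw [if_pos hit] at e₀
      rw [if_neg (by omega), add_zero] at e₁
      have hcapt := hcap t
      rw [abs_of_nonneg (by omega)] at hcapt
      have := tri_mono (by omega : m - t ≤ m)
      have := hf.rise_lt t (j + 1) ht (by omega)
        (by rw [← sub_sub]; exact le_tri_sub_tri_sub_one (by omega) (by omega))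
      omega
    rw [if_neg hit, add_zero] at e₀
    by_cases hit' : i = t - 1
    · rw [if_pos hit'] at e₁
      subst hit'
      rw [sub_add_cancel] at hfire
      have h₁ := hf.rise_lt t j ht hj (by omega)
      by_contra! h
      rcases lt_or_eq_of_le ht with ht₁ | rfl
      · rw [if_neg (by omega)] at hfire
        have := hf.rise_lt (t - 1) j (by omega) hj (by omega)
        omega
      · -- the origin ends empty, so a firing there needs both neighbours to lag behind
        simp only [sub_self, if_true, zero_sub] at hfire e₁ h h₁
        have := hf'.drop_le 0 j le_rfl hj (by simpa using (by omega : f 0 ≤ tri m - tri (m - j)))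
        simp only [neg_zero, zero_add] at this
        omega
    · rw [if_neg hit', add_zero] at e₁
      have := hf.rise_lt t j ht hj (by omega)
      omega

section Firing

variable {ι : Type*}

/-- An unlabeled firing move; `LMove.fires` forgets the labels. -/
def Fires (c c' : ι → ℤ) (i : ℤ) : Prop :=
  ∃ a b, a ≠ b ∧ c a = i ∧ c b = i ∧ c' a = i - 1 ∧ c' b = i + 1 ∧
    ∀ x, x ≠ a → x ≠ b → c' x = c x

theorem Fires.neg {c c' : ι → ℤ} {i : ℤ} (h : Fires c c' i) : Fires (-c) (-c') (-i) := by
  obtain ⟨a, b, hab, ha, hb, ha', hb', hrest⟩ := h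
  refine ⟨b, a, hab.symm, by simp [hb], by simp [ha], by simp [hb']; ring, by simp [ha']; ring,
    fun x hxb hxa => by simp [hrest x hxa hxb]⟩

structure IsFiringSeq (T : ℕ) (cfg : ℕ → ι → ℤ) (site : ℕ → ℤ) : Prop where
  init : ∀ a, cfg 0 a = 0
  fires : ∀ u < T, Fires (cfg u) (cfg (u + 1)) (site u)

theorem IsFiringSeq.neg {T : ℕ} {cfg : ℕ → ι → ℤ} {site : ℕ → ℤ} (hS : IsFiringSeq T cfg site) :
    IsFiringSeq T (-cfg) (-site) :=
  ⟨fun a => by simp [hS.init], fun u hu => (hS.fires u hu).neg⟩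

def firingsBefore (site : ℕ → ℤ) (u : ℕ) (t : ℤ) : ℕ := #{v ∈ range u | site v = t}

def firingsFrom (site : ℕ → ℤ) (T u : ℕ) (t : ℤ) : ℕ := #{v ∈ Ico u T | site v = t}

section Counting

variable {site : ℕ → ℤ} {T u : ℕ} {t : ℤ}

theorem firingsBefore_eq_sum :
    (firingsBefore site u t : ℤ) = ∑ v ∈ range u, if site v = t then 1 else 0 := by
  simp [firingsBefore, sum_boole]

theorem firingsBefore_succ :
    firingsBefore site (u + 1) t = firingsBefore site u t + if site u = t then 1 else 0 := by
  simp only [firingsBefore, range_add_one, filter_insert]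
  split_ifs <;> simp [card_insert_of_notMem]

theorem firingsFrom_eq_succ (hu : u < T) :
    firingsFrom site T u t = firingsFrom site T (u + 1) t + if site u = t then 1 else 0 := by
  simp only [firingsFrom, ← insert_Ico_add_one_left_eq_Ico hu, filter_insert]
  split_ifs <;> simp [card_insert_of_notMem]

theorem firingsBefore_add_firingsFrom (hu : u ≤ T) :
    firingsBefore site u t + firingsFrom site T u t = firingsBefore site T t := by
  rw [firingsBefore, firingsFrom, firingsBefore, range_eq_Ico, range_eq_Ico,
    ← card_union_of_disjoint (disjoint_filter_filter (Ico_disjoint_Ico_consecutive 0 u T)),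
    ← filter_union, Ico_union_Ico_eq_Ico (Nat.zero_le u) hu]

theorem firingsFrom_zero : firingsFrom site T 0 t = firingsBefore site T t := by
  rw [firingsFrom, firingsBefore, range_eq_Ico]

theorem firingsFrom_antitone {v : ℕ} (huv : u ≤ v) :
    firingsFrom site T v t ≤ firingsFrom site T u t :=
  card_le_card (filter_subset_filter _ (Ico_subset_Ico_left huv))

theorem firingsBefore_neg : firingsBefore (-site) u t = firingsBefore site u (-t) := by
  simp only [firingsBefore, Pi.neg_apply, neg_eq_iff_eq_neg]

theorem firingsFrom_neg : firingsFrom (-site) T u t = firingsFrom site T u (-t) := by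
  simp only [firingsFrom, Pi.neg_apply, neg_eq_iff_eq_neg]

end Counting

variable [Fintype ι]

def chipsAt (c : ι → ℤ) (s : ℤ) : ℕ := #{x | c x = s}

theorem chipsAt_neg (c : ι → ℤ) (s : ℤ) : chipsAt (-c) s = chipsAt c (-s) := by
  simp only [chipsAt, Pi.neg_apply, neg_eq_iff_eq_neg]

namespace Fires

variable {c c' : ι → ℤ} {i : ℤ}

theorem sum_comp (h : Fires c c' i) (φ : ℤ → ℤ) :
    ∑ x, φ (c' x) = ∑ x, φ (c x) + (φ (i - 1) + φ (i + 1) - 2 * φ i) := by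
  classical
  obtain ⟨a, b, hab, ha, hb, ha', hb', hrest⟩ := h
  have hsplit (d : ι → ℤ) :
      ∑ x, φ (d x) = ∑ x ∈ univ \ {a, b}, φ (d x) + (φ (d a) + φ (d b)) := by
    rw [← sum_pair (f := fun x => φ (d x)) hab, sum_sdiff (subset_univ _)]
  have hrest' : ∀ x ∈ univ \ {a, b}, φ (c' x) = φ (c x) := fun x hx => by
    simp only [mem_sdiff, mem_insert, mem_singleton, not_or] at hx
    rw [hrest x hx.2.1 hx.2.2]
  rw [hsplit c', hsplit c, sum_congr rfl hrest', ha, hb, ha', hb']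
  ring

theorem two_le_chipsAt (h : Fires c c' i) : 2 ≤ chipsAt c i := by
  classical
  obtain ⟨a, b, hab, ha, hb, -⟩ := h
  rw [← card_pair hab]
  refine card_le_card fun x hx => ?_
  rcases mem_insert.mp hx with rfl | hx
  · simpa
  · rw [mem_singleton.mp hx]
    simpa

end Fires

namespace IsFiringSeq

variable {T : ℕ} {cfg : ℕ → ι → ℤ} {site : ℕ → ℤ} (hS : IsFiringSeq T cfg site)
include hS

theorem sum_comp (φ : ℤ → ℤ) {u : ℕ} (hu : u ≤ T) : ∑ x, φ (cfg u x) =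
    Fintype.card ι * φ 0 + ∑ v ∈ range u, (φ (site v - 1) + φ (site v + 1) - 2 * φ (site v)) := by
  induction u with
  | zero => simp [hS.init]
  | succ u ih => rw [(hS.fires u hu).sum_comp, ih (by omega), sum_range_succ, add_assoc]

theorem sum_eq_zero {u : ℕ} (hu : u ≤ T) : ∑ x, cfg u x = 0 := by
  have := hS.sum_comp id hu
  simp only [id, mul_zero, zero_add] at this
  rw [this]
  exact Finset.sum_eq_zero fun v _ => by ring

theorem sum_max_sub_eq_firingsBefore {u : ℕ} (hu : u ≤ T) {t : ℤ} (ht : 0 ≤ t) :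
    ∑ x, max (cfg u x - t) 0 = firingsBefore site u t := by
  rw [hS.sum_comp (fun p => max (p - t) 0) hu, firingsBefore_eq_sum, zero_sub,
    max_eq_right (by omega), mul_zero, zero_add]
  refine sum_congr rfl fun v _ => ?_
  split_ifs <;> omega

theorem chipsAt_eq_firingsBefore {u : ℕ} (hu : u ≤ T) (s : ℤ) :
    (chipsAt (cfg u) s : ℤ) = (if s = 0 then (Fintype.card ι : ℤ) else 0) +
      firingsBefore site u (s - 1) + firingsBefore site u (s + 1) - 2 * firingsBefore site u s := by
  have := hS.sum_comp (fun p => if p = s then 1 else 0) hu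
  simp only [sum_boole, sum_add_distrib, sum_sub_distrib, ← mul_sum, sub_eq_iff_eq_add,
    ← eq_sub_iff_add_eq, eq_comm (a := (0 : ℤ))] at this
  rw [chipsAt, this, firingsBefore, firingsBefore, firingsBefore]
  split_ifs <;> ring

theorem firingsBefore_le_tri {m : ℕ} (hι : Fintype.card ι = 2 * m) {u : ℕ} (hu : u ≤ T)
    (t : ℤ) : (firingsBefore site u t : ℤ) ≤ tri (m - |t|) := by
  induction u generalizing t with
  | zero => simp [firingsBefore, tri_nonneg]
  | succ u ih =>
    rw [firingsBefore_succ]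
    split_ifs with hit
    · subst hit
      have hcap := ih (by omega) (site u)
      suffices (firingsBefore site u (site u) : ℤ) ≠ tri (m - |site u|) by push_cast; omega
      intro heq
      have htwo := (hS.fires u hu).two_le_chipsAt
      have hN := hS.chipsAt_eq_firingsBefore (u := u) (by omega) (site u)
      have hlap := tri_laplacian_le (m := m) (by positivity) (site u)
      have := ih (by omega) (site u - 1)
      have := ih (by omega) (site u + 1)
      rw [hι] at hN
      split_ifs at hN hlap <;> push_cast at hN <;> omega
    · simpa using ih (by omega) t

theorem cfg_final_le {m : ℕ} (hι : Fintype.card ι = 2 * m) (x : ι) : cfg T x ≤ m := by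
  have hsum := hS.sum_max_sub_eq_firingsBefore le_rfl (t := m) (by positivity)
  have hcap := hS.firingsBefore_le_tri hι le_rfl m
  rw [abs_of_nonneg (by positivity), sub_self, tri_of_nonpos le_rfl, ← hsum] at hcap
  have := (sum_eq_zero_iff_of_nonneg fun y _ => le_max_right (cfg T y - m) 0).mp
    (le_antisymm hcap (sum_nonneg fun y _ => le_max_right _ _)) x (mem_univ x)
  omega

/-- The `2m` final positions are distinct and lie in `[-m, m]`, so exactly one site `z` of that
interval is empty; the first moment `∑ x, cfg T x = 0` forces `z = 0`. -/
theorem image_cfg_final {m : ℕ} (hι : Fintype.card ι = 2 * m) (hT : Function.Injective (cfg T)) :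
    univ.image (cfg T) = (Icc (-(m : ℤ)) m).erase 0 := by
  classical
  have hsub : univ.image (cfg T) ⊆ Icc (-(m : ℤ)) m := fun v hv => by
    obtain ⟨x, -, rfl⟩ := mem_image.mp hv
    have := hS.neg.cfg_final_le hι x
    have := hS.cfg_final_le hι x
    simp only [Pi.neg_apply, mem_Icc] at *
    omega
  have hcard : #(Icc (-(m : ℤ)) m \ univ.image (cfg T)) = 1 := by
    rw [card_sdiff_of_subset hsub, card_image_of_injective _ hT, card_univ, hι, Int.card_Icc]
    omega
  obtain ⟨z, hz⟩ := card_eq_one.mp hcard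
  have hsum := sum_sdiff (f := fun v => v) hsub
  rw [hz, sum_singleton, sum_image fun x _ y _ h => hT h, sum_Icc_neg_self_eq_zero,
    hS.sum_eq_zero le_rfl, add_zero] at hsum
  rw [← sdiff_singleton_eq_erase, ← hsum, ← hz, Finset.sdiff_sdiff_eq_self hsub]

theorem chipsAt_final {m : ℕ} (hι : Fintype.card ι = 2 * m) (hT : Function.Injective (cfg T))
    (s : ℤ) : chipsAt (cfg T) s = if s ∈ (Icc (-(m : ℤ)) m).erase 0 then 1 else 0 := by
  classical
  rw [← hS.image_cfg_final hι hT, chipsAt]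
  split_ifs with hs
  · obtain ⟨x, -, rfl⟩ := mem_image.mp hs
    exact card_eq_one.mpr ⟨x, by ext y; simp [hT.eq_iff]⟩
  · exact card_eq_zero.mpr (filter_eq_empty_iff.mpr fun x _ hx => hs (by simp [← hx]))

theorem chipsAt_final_le {m : ℕ} (hι : Fintype.card ι = 2 * m) (hT : Function.Injective (cfg T))
    (s : ℤ) : (chipsAt (cfg T) s : ℤ) ≤ if s = 0 then 0 else 1 := by
  rw [hS.chipsAt_final hι hT]
  split_ifs <;> simp_all

theorem firingsBefore_final_of_nonneg {m : ℕ} (hι : Fintype.card ι = 2 * m)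
    (hT : Function.Injective (cfg T)) {t : ℤ} (ht : 0 ≤ t) :
    (firingsBefore site T t : ℤ) = tri (m - t) := by
  rw [← hS.sum_max_sub_eq_firingsBefore le_rfl ht, ← sum_max_sub_erase_zero ht,
    ← hS.image_cfg_final hι hT, sum_image fun x _ y _ h => hT h]

theorem firingsBefore_final {m : ℕ} (hι : Fintype.card ι = 2 * m)
    (hT : Function.Injective (cfg T)) (t : ℤ) :
    (firingsBefore site T t : ℤ) = tri (m - |t|) := by
  rcases le_total 0 t with ht | ht
  · rw [abs_of_nonneg ht, hS.firingsBefore_final_of_nonneg hι hT ht]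
  · have := hS.neg.firingsBefore_final_of_nonneg hι (neg_injective.comp hT) (neg_nonneg.mpr ht)
    rwa [firingsBefore_neg, neg_neg, ← abs_of_nonpos ht] at this

theorem chipsAt_eq_firingsFrom {u : ℕ} (hu : u ≤ T) (s : ℤ) :
    (chipsAt (cfg u) s : ℤ) = chipsAt (cfg T) s + 2 * firingsFrom site T u s -
      firingsFrom site T u (s - 1) - firingsFrom site T u (s + 1) := by
  have hu' := hS.chipsAt_eq_firingsBefore hu s
  have hT := hS.chipsAt_eq_firingsBefore le_rfl s
  have h₁ := firingsBefore_add_firingsFrom (site := site) (t := s - 1) hu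
  have h₂ := firingsBefore_add_firingsFrom (site := site) (t := s) hu
  have h₃ := firingsBefore_add_firingsFrom (site := site) (t := s + 1) hu
  split_ifs at hu' hT <;> omega

theorem gridInvariant_firingsFrom {m : ℕ} (hι : Fintype.card ι = 2 * m)
    (hT : Function.Injective (cfg T)) {u : ℕ} (hu : u ≤ T) :
    GridInvariant m (fun t => (firingsFrom site T u t : ℤ)) := by
  induction u generalizing cfg site with
  | zero =>
    simp only [firingsFrom_zero, hS.firingsBefore_final hι hT]
    exact gridInvariant_tri m
  | succ u ih =>
    have hf := ih hS hT (by omega)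
    have hf' := ih hS.neg (neg_injective.comp hT) (by omega)
    simp only [firingsFrom_neg] at hf'
    refine hf.of_fire (i := site u) hf' (fun t => ?_) ?_ (fun t => ?_)
    · rw [← hS.firingsBefore_final hι hT, ← firingsFrom_zero]
      exact_mod_cast firingsFrom_antitone (Nat.zero_le u)
    · have htwo := (hS.fires u hu).two_le_chipsAt
      have hN := hS.chipsAt_eq_firingsFrom (u := u) (by omega) (site u)
      have hNT := hS.chipsAt_final_le hι hT (site u)
      split_ifs at hNT ⊢ <;> omega
    · exact_mod_cast firingsFrom_eq_succ hu

theorem grid_move_of_le {m x y u : ℕ} (hι : Fintype.card ι = 2 * m)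
    (hT : Function.Injective (cfg T)) (hyx : y ≤ x) (hxm : x < m) (hu : u < T)
    (hsite : site u = x - y) (hr : firingsFrom site T u (x - y) = y + 1) :
    chipsAt (cfg u) (x - y) = 2 ∧ firingsFrom site T u (x + 1 - y) = min (x + 1) y ∧
      firingsFrom site T u (x - (y + 1)) = min x (y + 1) := by
  have hf := hS.gridInvariant_firingsFrom hι hT hu.le
  have hf' := hS.neg.gridInvariant_firingsFrom hι (neg_injective.comp hT) hu.le
  simp only [firingsFrom_neg] at hf'
  have htwo := (hS.fires u hu).two_le_chipsAt
  rw [hsite] at htwo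
  have hN := hS.chipsAt_eq_firingsFrom hu.le (x - y)
  have hNT := hS.chipsAt_final hι hT (x - y)
  have hdrop := hf.drop_le (x - y) 1 (by omega) le_rfl (by rw [tri_sub_tri_sub_one]; omega)
  rw [show (x : ℤ) + 1 - y = x - y + 1 by ring, show (x : ℤ) - (y + 1) = x - y - 1 by ring]
  rcases hyx.eq_or_lt with rfl | hlt
  · simp only [sub_self, mem_erase, ne_eq, not_true_eq_false, false_and, if_false, zero_add,
      zero_sub] at hr htwo hNT hN hdrop ⊢
    have hdrop' := hf'.drop_le 0 1 le_rfl le_rfl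
      (by simp only [neg_zero, sub_zero]; rw [tri_sub_tri_sub_one]; omega)
    simp only [neg_zero, zero_add] at hdrop'
    omega
  · have hrise := hf.rise_lt (x - y) 1 (by omega) le_rfl (by rw [tri_sub_tri_sub_one]; omega)
    rw [if_pos (by simp only [mem_erase, mem_Icc]; omega)] at hNT
    omega

theorem grid_move {m x y u : ℕ} (hι : Fintype.card ι = 2 * m) (hT : Function.Injective (cfg T))
    (hx : x < m) (hy : y < m) (hu : u < T) (hsite : site u = x - y)
    (hr : firingsFrom site T u (x - y) = min x y + 1) :
    chipsAt (cfg u) (x - y) = 2 ∧ firingsFrom site T u (x + 1 - y) = min (x + 1) y ∧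
      firingsFrom site T u (x - (y + 1)) = min x (y + 1) := by
  rcases le_total y x with hyx | hxy
  · exact hS.grid_move_of_le hι hT hyx hx hu hsite (by rw [hr, min_eq_right hyx])
  · have := hS.neg.grid_move_of_le hι (neg_injective.comp hT) hxy hy hu
      (by simp [hsite]) (by rw [firingsFrom_neg, neg_sub, hr, min_eq_left hxy])
    simp only [Pi.neg_apply, chipsAt_neg, firingsFrom_neg, neg_sub] at this
    rw [min_comm (x + 1), min_comm x]
    exact ⟨this.1, this.2.2, this.2.1⟩

end IsFiringSeq

end Firing

end ChipFiring

open ChipFiring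

theorem LMove.fires {ι : Type} {label c c' : ι → ℤ} {i : ℤ} (h : LMove label c c' i) :
    Fires c c' i := by
  obtain ⟨a, b, hab, -, h⟩ := h
  exact ⟨a, b, hab, h⟩

theorem card_chips (m : ℕ) : Fintype.card (Chips m) = 2 * m := by
  rw [Fintype.card_coe, card_erase_of_mem (by simp), Int.card_Icc]
  omega

namespace JthLastFiring

variable {site : ℕ → ℤ} {T : ℕ} {s : ℤ} {j v : ℕ}

theorem firingsFrom_eq (h : JthLastFiring site T s j v) (hj : 1 ≤ j) :
    firingsFrom site T v s = j := by
  have h₁ := firingsFrom_eq_succ (site := site) (t := s) h.1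
  have h₂ : firingsFrom site T (v + 1) s = j - 1 := h.2.2
  rw [if_pos h.2.1] at h₁
  omega

theorem lt_of_firingsFrom_lt (h : JthLastFiring site T s j v) {u : ℕ}
    (hu : firingsFrom site T u s < j) : v < u := by
  by_contra! huv
  have := firingsFrom_antitone (site := site) (T := T) (t := s) huv
  have := h.firingsFrom_eq (by omega)
  omega

end JthLastFiring

/-- Grid-structure lemma: in any complete labeled chip-firing sequence with `2m`
chips (labeled `-m, …, -1, 1, …, m`) starting at the origin, for `0 ≤ x, y ≤ m-1`,
firing move `(x, y)` (the `(min x y + 1)`-th-from-last firing at site `x - y`)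
occurs with exactly 2 chips present at site `x - y`, and it occurs after the
firing moves `(x+1, y)` and `(x, y+1)` whenever those exist. -/
theorem stmt0 (m : ℕ) (hm : 1 ≤ m) (T : ℕ)
    (cfg : ℕ → Chips m → ℤ) (site : ℕ → ℤ)
    (hinit : ∀ a, cfg 0 a = 0)
    (hstep : ∀ u < T, LMove (fun a => a.1) (cfg u) (cfg (u + 1)) (site u))
    (hcomplete : Function.Injective (cfg T)) :
    ∀ x y : ℕ, x ≤ m - 1 → y ≤ m - 1 →
      ∀ u, JthLastFiring site T ((x : ℤ) - (y : ℤ)) (min x y + 1) u →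
        ((Finset.univ.filter (fun a : Chips m => cfg u a = (x : ℤ) - (y : ℤ))).card = 2) ∧
        (∀ v, JthLastFiring site T (((x : ℤ) + 1) - (y : ℤ)) (min (x + 1) y + 1) v → v < u) ∧
        (∀ v, JthLastFiring site T ((x : ℤ) - ((y : ℤ) + 1)) (min x (y + 1) + 1) v → v < u) := by
  intro x y hx hy u hu
  have hS : IsFiringSeq T cfg site := ⟨hinit, fun v hv => (hstep v hv).fires⟩
  obtain ⟨hN, hright, hleft⟩ := hS.grid_move (card_chips m) hcomplete (by omega) (by omega) hu.1
    hu.2.1 (hu.firingsFrom_eq (by omega))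
  exact ⟨hN, fun v hv => hv.lt_of_firingsFrom_lt (by omega),
    fun v hv => hv.lt_of_firingsFrom_lt (by omega)⟩
end

section
/- Consider labeled chip-firing on ℤ with 2m chips (m ≥ 1), bijectively labeled by {−m,…,−1,1,…,m}, all initially at site 0. At every point of every firing sequence, the chip labeled k with k < 0 has position at most k+m, and the chip labeled k with k > 0 has position at least k−m. -/
/-- Position bounds: with `2m` chips labeled `-m, …, -1, 1, …, m` starting at the
origin, at every point of every firing sequence the chip labeled `k < 0` has
position at most `k + m`, and the chip labeled `k > 0` has position at least
`k - m`. -/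
theorem stmt1 (m : ℕ) (hm : 1 ≤ m) (T : ℕ)
    (cfg : ℕ → Chips m → ℤ) (site : ℕ → ℤ)
    (hinit : ∀ a, cfg 0 a = 0)
    (hstep : ∀ u < T, LMove (fun a => a.1) (cfg u) (cfg (u + 1)) (site u)) :
    ∀ u ≤ T, ∀ a : Chips m,
      (a.1 < 0 → cfg u a ≤ a.1 + m) ∧ (0 < a.1 → a.1 - (m : ℤ) ≤ cfg u a) := by
  classical
  set S : Finset ℤ := (Finset.Icc (-(m : ℤ)) m).erase 0 with hS
  set N : Chips m → ℕ := fun a => (S.filter (fun z => z < a.1)).card with hN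
  set M : Chips m → ℕ := fun a => (S.filter (fun z => a.1 < z)).card with hM
  -- monotonicity of the counts
  have hNmono : ∀ x y : Chips m, x.1 < y.1 → N x + 1 ≤ N y := by
    intro x y hlt
    have hsub : insert x.1 (S.filter (fun z => z < x.1)) ⊆ S.filter (fun z => z < y.1) := by
      intro z hz
      rcases Finset.mem_insert.mp hz with rfl | hz
      · exact Finset.mem_filter.mpr ⟨x.2, hlt⟩
      · obtain ⟨hzS, hzx⟩ := Finset.mem_filter.mp hz
        exact Finset.mem_filter.mpr ⟨hzS, hzx.trans hlt⟩
    have hnot : x.1 ∉ S.filter (fun z => z < x.1) := by simp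
    have := Finset.card_le_card hsub
    rwa [Finset.card_insert_of_notMem hnot] at this
  have hMmono : ∀ x y : Chips m, x.1 < y.1 → M y + 1 ≤ M x := by
    intro x y hlt
    have hsub : insert y.1 (S.filter (fun z => y.1 < z)) ⊆ S.filter (fun z => x.1 < z) := by
      intro z hz
      rcases Finset.mem_insert.mp hz with rfl | hz
      · exact Finset.mem_filter.mpr ⟨y.2, hlt⟩
      · obtain ⟨hzS, hzy⟩ := Finset.mem_filter.mp hz
        exact Finset.mem_filter.mpr ⟨hzS, hlt.trans hzy⟩
    have hnot : y.1 ∉ S.filter (fun z => y.1 < z) := by simp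
    have := Finset.card_le_card hsub
    rwa [Finset.card_insert_of_notMem hnot] at this
  -- the main invariant
  have key : ∀ u ≤ T, ∀ a : Chips m, -(M a : ℤ) ≤ cfg u a ∧ cfg u a ≤ (N a : ℤ) := by
    intro u
    induction u with
    | zero =>
      intro _ a
      rw [hinit]
      constructor <;> omega
    | succ u ih =>
      intro hu a
      have hu' : u ≤ T := Nat.le_of_succ_le hu
      obtain ⟨x, y, hxy, hlt, hcx, hcy, hcx', hcy', hoth⟩ := hstep u (Nat.lt_of_succ_le hu)
      by_cases hax : a = x
      · subst hax
        rw [hcx']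
        have hy1 := (ih hu' y).1
        have hx2 := (ih hu' a).2
        rw [hcy] at hy1
        rw [hcx] at hx2
        have hMm := hMmono a y hlt
        constructor
        · have : ((M y : ℤ) + 1) ≤ (M a : ℤ) := by exact_mod_cast hMm
          linarith
        · linarith
      · by_cases hay : a = y
        · subst hay
          rw [hcy']
          have hy1 := (ih hu' a).1
          have hx2 := (ih hu' x).2
          rw [hcy] at hy1
          rw [hcx] at hx2
          have hNm := hNmono x a hlt
          constructor
          · linarith
          · have : ((N x : ℤ) + 1) ≤ (N a : ℤ) := by exact_mod_cast hNm
            linarith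
        · rw [hoth a hax hay]
          exact ih hu' a
  -- translate the counts into the stated bounds
  intro u hu a
  have h := key u hu a
  have haS := a.2
  have hmem : -(m : ℤ) ≤ a.1 ∧ a.1 ≤ (m : ℤ) := by
    have := Finset.mem_of_mem_erase haS
    exact Finset.mem_Icc.mp this
  constructor
  · intro _
    have hsub : S.filter (fun z => z < a.1) ⊆ Finset.Icc (-(m : ℤ)) (a.1 - 1) := by
      intro z hz
      obtain ⟨hzS, hza⟩ := Finset.mem_filter.mp hz
      have hz' := Finset.mem_Icc.mp (Finset.mem_of_mem_erase hzS)
      exact Finset.mem_Icc.mpr ⟨hz'.1, by omega⟩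
    have hcard : N a ≤ (Finset.Icc (-(m : ℤ)) (a.1 - 1)).card := Finset.card_le_card hsub
    have hic : (Finset.Icc (-(m : ℤ)) (a.1 - 1)).card = (a.1 + m).toNat := by
      rw [Int.card_Icc]; ring_nf
    have hNle : (N a : ℤ) ≤ a.1 + m := by
      rw [hic] at hcard
      have : ((a.1 + (m : ℤ)).toNat : ℤ) = a.1 + m := Int.toNat_of_nonneg (by omega)
      omega
    linarith [h.2]
  · intro _
    have hsub : S.filter (fun z => a.1 < z) ⊆ Finset.Icc (a.1 + 1) (m : ℤ) := by
      intro z hz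
      obtain ⟨hzS, hza⟩ := Finset.mem_filter.mp hz
      have hz' := Finset.mem_Icc.mp (Finset.mem_of_mem_erase hzS)
      exact Finset.mem_Icc.mpr ⟨by omega, hz'.2⟩
    have hcard : M a ≤ (Finset.Icc (a.1 + 1) (m : ℤ)).card := Finset.card_le_card hsub
    have hic : (Finset.Icc (a.1 + 1) (m : ℤ)).card = ((m : ℤ) - a.1).toNat := by
      rw [Int.card_Icc]; ring_nf
    have hMle : (M a : ℤ) ≤ (m : ℤ) - a.1 := by
      rw [hic] at hcard
      have : (((m : ℤ) - a.1).toNat : ℤ) = (m : ℤ) - a.1 := Int.toNat_of_nonneg (by omega)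
      omega
    linarith [h.1]
end

section
/- Consider unlabeled exponential-edge chip-firing with parameter t ≥ 0, starting from 2^{t+2} chips at site 0. In every complete firing sequence, the number f(k) of firings at site k satisfies f(k) = f(k+1) + 2 for every k with 0 ≤ k ≤ t, and f(k) = f(k−1) + 2 for every k with −t ≤ k ≤ 0; consequently f(k) = 2(t−|k|) + 3 for every k with |k| ≤ t+1, and f(k) = 0 for every k with |k| ≥ t+2. -/
/-- `Ecount t k` is the number of edges between sites `k` and `k + 1` in the
exponential-edge graph with parameter `t`: `2^(t-k)` for `0 ≤ k ≤ t`,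
`2^(t+k+1)` for `-t-1 ≤ k ≤ -1` (these are the `2^(t-j)` edges between sites
`-j` and `-j-1` for `0 ≤ j ≤ t`), and `1` otherwise. -/
def Ecount (t : ℕ) (k : ℤ) : ℕ :=
  if 0 ≤ k ∧ k ≤ (t : ℤ) then 2 ^ (t - k.toNat)
  else if -(t : ℤ) - 1 ≤ k ∧ k ≤ -1 then 2 ^ (t - (-k - 1).toNat)
  else 1

/-- Number of edges joining site `i` to site `i - 1`. -/
def Lnum (t : ℕ) (i : ℤ) : ℕ := Ecount t (i - 1)

/-- Number of edges joining site `i` to site `i + 1`. -/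
def Rnum (t : ℕ) (i : ℤ) : ℕ := Ecount t i

/-- An unlabeled exponential-edge firing of site `i`: legal when `i` holds at
least `Lnum t i + Rnum t i` chips; `Lnum t i` chips move to `i - 1` and
`Rnum t i` chips move to `i + 1`. -/
def UExpFire (t : ℕ) (c c' : ℤ → ℕ) (i : ℤ) : Prop :=
  Lnum t i + Rnum t i ≤ c i ∧
  c' = fun j => if j = i - 1 then c j + Lnum t i
    else if j = i + 1 then c j + Rnum t i
    else if j = i then c j - (Lnum t i + Rnum t i)
    else c j

/-- The number of firings at site `k` during the firing sequence. -/
def firings (site : ℕ → ℤ) (T : ℕ) (k : ℤ) : ℕ :=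
  ((Finset.range T).filter (fun u => site u = k)).card

/- ----------------- auxiliary material ----------------- -/

lemma Ecount_nat (t n : ℕ) (h : n ≤ t) : Ecount t (n:ℤ) = 2 ^ (t - n) := by
  unfold Ecount
  rw [if_pos ⟨Int.natCast_nonneg n, by exact_mod_cast h⟩]
  congr 1 <;> omega

lemma Ecount_neg (t n : ℕ) (h : n ≤ t) : Ecount t (-1 - (n:ℤ)) = 2 ^ (t - n) := by
  unfold Ecount
  rw [if_neg (by omega), if_pos (by constructor <;> omega)]
  congr 1 <;> omega

lemma Ecount_high (t : ℕ) (k : ℤ) (h : (t:ℤ) < k) : Ecount t k = 1 := by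
  unfold Ecount
  rw [if_neg (by omega), if_neg (by omega)]

lemma Ecount_low (t : ℕ) (k : ℤ) (h : k < -(t:ℤ) - 1) : Ecount t k = 1 := by
  unfold Ecount
  rw [if_neg (by omega), if_neg (by omega)]

/-- the odometer -/
def fstar (t : ℕ) (k : ℤ) : ℤ :=
  if k.natAbs ≤ t + 1 then 2*((t:ℤ) + 1 - (k.natAbs:ℤ)) + 1 else 0

lemma fstar_nonneg (t : ℕ) (k : ℤ) : 0 ≤ fstar t k := by
  simp only [fstar]; split_ifs <;> omega

lemma firings_succ (site : ℕ → ℤ) (u : ℕ) (k : ℤ) :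
    firings site (u+1) k = firings site u k + if site u = k then 1 else 0 := by
  unfold firings
  rw [Finset.range_add_one, Finset.filter_insert]
  split_ifs with h
  · rw [Finset.card_insert_of_notMem (by simp)]
  · simp

/-- stability of the target configuration -/
lemma stab (t : ℕ) (i : ℤ) :
    (if i = 0 then ((2:ℤ))^(t+2) else 0)
      + (Ecount t (i-1) : ℤ) * (fstar t (i-1) - fstar t i)
      + (Ecount t i : ℤ) * (fstar t (i+1) - fstar t i)
    ≤ (Ecount t (i-1) : ℤ) + (Ecount t i : ℤ) - 1 := by
  rcases Int.eq_nat_or_neg i with ⟨n, rfl | rfl⟩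
  · -- nonnegative side
    by_cases h0 : n = 0
    · subst h0
      rw [show ((0:ℕ):ℤ) - 1 = -1 - ((0:ℕ):ℤ) by norm_num]
      rw [Ecount_neg t 0 (by omega), Ecount_nat t 0 (by omega)]
      have f1 : fstar t (-1 - ((0:ℕ):ℤ)) = fstar t ((0:ℕ):ℤ) - 2 := by
        simp only [fstar]; split_ifs <;> omega
      have f2 : fstar t (((0:ℕ):ℤ) + 1) = fstar t ((0:ℕ):ℤ) - 2 := by
        simp only [fstar]; split_ifs <;> omega
      rw [f1, f2, if_pos (by norm_num)]
      have hA : (1:ℤ) ≤ 2 ^ (t - 0) := one_le_pow₀ (by norm_num)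
      push_cast
      rw [show t + 2 = (t - 0) + 1 + 1 by omega, pow_succ, pow_succ]
      nlinarith
    · by_cases hle : n ≤ t
      · -- 1 ≤ n ≤ t
        have e1 : (Ecount t ((n:ℤ) - 1) : ℤ) = 2 * 2 ^ (t - n) := by
          rw [show ((n:ℤ) - 1) = ((n-1:ℕ):ℤ) by omega, Ecount_nat t (n-1) (by omega),
            show t - (n-1) = (t-n) + 1 by omega]
          push_cast [pow_succ]
          ring
        have e2 : (Ecount t ((n:ℤ)) : ℤ) = 2 ^ (t - n) := by
          rw [Ecount_nat t n hle]; push_cast; ring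
        have f1 : fstar t ((n:ℤ) - 1) = fstar t (n:ℤ) + 2 := by
          simp only [fstar]; split_ifs <;> omega
        have f2 : fstar t ((n:ℤ) + 1) = fstar t (n:ℤ) - 2 := by
          simp only [fstar]; split_ifs <;> omega
        rw [e1, e2, f1, f2, if_neg (by omega)]
        have hA : (1:ℤ) ≤ 2 ^ (t - n) := one_le_pow₀ (by norm_num)
        nlinarith
      · by_cases ht1 : n = t + 1
        · subst ht1
          have e1 : (Ecount t (((t+1:ℕ):ℤ) - 1) : ℤ) = 1 := by
            rw [show (((t+1:ℕ):ℤ) - 1) = ((t:ℕ):ℤ) by push_cast; ring,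
              Ecount_nat t t le_rfl, Nat.sub_self, pow_zero, Nat.cast_one]
          have e2 : (Ecount t (((t+1:ℕ):ℤ)) : ℤ) = 1 := by
            rw [Ecount_high t _ (by push_cast; omega), Nat.cast_one]
          have f1 : fstar t (((t+1:ℕ):ℤ) - 1) = fstar t ((t+1:ℕ):ℤ) + 2 := by
            simp only [fstar]; split_ifs <;> omega
          have f2 : fstar t (((t+1:ℕ):ℤ) + 1) = fstar t ((t+1:ℕ):ℤ) - 1 := by
            simp only [fstar]; split_ifs <;> omega
          rw [e1, e2, f1, f2, if_neg (by push_cast; omega)]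
          ring_nf
          omega
        · -- n ≥ t + 2
          have hn2 : t + 2 ≤ n := by omega
          have e1 : (Ecount t ((n:ℤ) - 1) : ℤ) = 1 := by
            rw [Ecount_high t _ (by push_cast; omega), Nat.cast_one]
          have e2 : (Ecount t ((n:ℤ)) : ℤ) = 1 := by
            rw [Ecount_high t _ (by push_cast; omega), Nat.cast_one]
          have f2 : fstar t ((n:ℤ)) = 0 := by
            simp only [fstar]; split_ifs <;> omega
          have f3 : fstar t ((n:ℤ) + 1) = 0 := by
            simp only [fstar]; split_ifs <;> omega
          have f1 : fstar t ((n:ℤ) - 1) = fstar t ((n:ℤ)) + (if n = t + 2 then 1 else 0) := by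
            simp only [fstar]; split_ifs <;> omega
          rw [e1, e2, f1, f2, f3, if_neg (by omega)]
          split_ifs <;> norm_num
  · -- negative side
    by_cases h0 : n = 0
    · subst h0
      rw [show (-((0:ℕ):ℤ)) - 1 = -1 - ((0:ℕ):ℤ) by norm_num, show (-((0:ℕ):ℤ)) = ((0:ℕ):ℤ) by norm_num]
      rw [Ecount_neg t 0 (by omega), Ecount_nat t 0 (by omega)]
      have f1 : fstar t (-1 - ((0:ℕ):ℤ)) = fstar t ((0:ℕ):ℤ) - 2 := by
        simp only [fstar]; split_ifs <;> omega
      have f2 : fstar t (((0:ℕ):ℤ) + 1) = fstar t ((0:ℕ):ℤ) - 2 := by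
        simp only [fstar]; split_ifs <;> omega
      rw [f1, f2, if_pos (by norm_num)]
      have hA : (1:ℤ) ≤ 2 ^ (t - 0) := one_le_pow₀ (by norm_num)
      push_cast
      rw [show t + 2 = (t - 0) + 1 + 1 by omega, pow_succ, pow_succ]
      nlinarith
    · by_cases hle : n ≤ t
      · -- -t ≤ -n ≤ -1
        have e1 : (Ecount t ((-(n:ℤ)) - 1) : ℤ) = 2 ^ (t - n) := by
          rw [show ((-(n:ℤ)) - 1) = -1 - ((n:ℕ):ℤ) by ring, Ecount_neg t n hle]
          push_cast
          ring
        have e2 : (Ecount t (-(n:ℤ)) : ℤ) = 2 * 2 ^ (t - n) := by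
          rw [show (-(n:ℤ)) = -1 - ((n-1:ℕ):ℤ) by omega, Ecount_neg t (n-1) (by omega),
            show t - (n-1) = (t-n) + 1 by omega]
          push_cast [pow_succ]
          ring
        have f1 : fstar t ((-(n:ℤ)) - 1) = fstar t (-(n:ℤ)) - 2 := by
          simp only [fstar]; split_ifs <;> omega
        have f2 : fstar t ((-(n:ℤ)) + 1) = fstar t (-(n:ℤ)) + 2 := by
          simp only [fstar]; split_ifs <;> omega
        rw [e1, e2, f1, f2, if_neg (by omega)]
        have hA : (1:ℤ) ≤ 2 ^ (t - n) := one_le_pow₀ (by norm_num)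
        nlinarith
      · by_cases ht1 : n = t + 1
        · subst ht1
          have e1 : (Ecount t ((-((t+1:ℕ):ℤ)) - 1) : ℤ) = 1 := by
            rw [Ecount_low t _ (by push_cast; omega), Nat.cast_one]
          have e2 : (Ecount t (-((t+1:ℕ):ℤ)) : ℤ) = 1 := by
            rw [show (-((t+1:ℕ):ℤ)) = -1 - ((t:ℕ):ℤ) by push_cast; ring,
              Ecount_neg t t le_rfl, Nat.sub_self, pow_zero, Nat.cast_one]
          have f1 : fstar t ((-((t+1:ℕ):ℤ)) - 1) = fstar t (-((t+1:ℕ):ℤ)) - 1 := by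
            simp only [fstar]; split_ifs <;> omega
          have f2 : fstar t ((-((t+1:ℕ):ℤ)) + 1) = fstar t (-((t+1:ℕ):ℤ)) + 2 := by
            simp only [fstar]; split_ifs <;> omega
          rw [e1, e2, f1, f2, if_neg (by push_cast; omega)]
          ring_nf
          omega
        · -- n ≥ t + 2
          have hn2 : t + 2 ≤ n := by omega
          have e1 : (Ecount t ((-(n:ℤ)) - 1) : ℤ) = 1 := by
            rw [Ecount_low t _ (by push_cast; omega), Nat.cast_one]
          have e2 : (Ecount t (-(n:ℤ)) : ℤ) = 1 := by
            rw [Ecount_low t _ (by push_cast; omega), Nat.cast_one]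
          have f2 : fstar t (-(n:ℤ)) = 0 := by
            simp only [fstar]; split_ifs <;> omega
          have f1 : fstar t ((-(n:ℤ)) - 1) = 0 := by
            simp only [fstar]; split_ifs <;> omega
          have f3 : fstar t ((-(n:ℤ)) + 1) = (if n = t + 2 then 1 else 0) := by
            simp only [fstar]; split_ifs <;> omega
          rw [e1, e2, f1, f2, f3, if_neg (by omega)]
          split_ifs <;> norm_num

/-- one-sided static uniqueness -/
lemma sideZero (t : ℕ) (d : ℤ → ℤ) (hd0 : ∀ k, 0 ≤ d k)
    (hdz : ∀ k : ℤ, (t:ℤ) + 2 ≤ k → d k = 0)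
    (hB : ∀ n : ℕ, 1 ≤ n → n ≤ t → d (n:ℤ) - d ((n:ℤ)+1) ≤ 2*(d ((n:ℤ)-1) - d (n:ℤ)))
    (hT : d ((t:ℤ)+1) - d ((t:ℤ)+2) ≤ d (t:ℤ) - d ((t:ℤ)+1))
    (h1 : d 0 ≤ d 1) : ∀ k : ℤ, 0 ≤ k → d k = 0 := by
  have mono : ∀ n : ℕ, n ≤ t → d (n:ℤ) ≤ d ((n:ℤ)+1) := by
    intro n
    induction n with
    | zero => intro _; simpa using h1
    | succ m ih =>
      intro hm
      have h2 := hB (m+1) (by omega) hm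
      have h3 := ih (by omega)
      push_cast at h2 ⊢
      rw [show (m:ℤ) + 1 - 1 = (m:ℤ) by ring] at h2
      linarith
  have mono2 : ∀ n : ℕ, n ≤ t + 1 → d (n:ℤ) ≤ d ((n:ℤ)+1) := by
    intro n hn
    rcases Nat.lt_or_ge n (t+1) with h | h
    · exact mono n (by omega)
    · have he : n = t + 1 := by omega
      subst he
      have h4 := mono t le_rfl
      push_cast
      rw [show (t:ℤ) + 1 + 1 = (t:ℤ) + 2 by ring]
      linarith
  have chain : ∀ m : ℕ, ∀ n : ℕ, n + m = t + 2 → d (n:ℤ) ≤ 0 := by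
    intro m
    induction m with
    | zero =>
      intro n hn
      rw [show ((n:ℤ)) = (t:ℤ)+2 by omega]
      exact le_of_eq (hdz _ le_rfl)
    | succ m ih =>
      intro n hn
      have h5 := mono2 n (by omega)
      have h6 := ih (n+1) (by omega)
      push_cast at h6
      linarith
  intro k hk
  rcases le_or_gt ((t:ℤ)+2) k with h | h
  · exact hdz k h
  · lift k to ℕ using hk
    have h7 := chain (t+2-k) k (by omega)
    have h8 := hd0 (k:ℤ)
    omega

/-- Firing counts for exponential-edge chip-firing with `2^(t+2)` chips at the
origin: in every complete firing sequence, `f k = f (k+1) + 2` for `0 ≤ k ≤ t`,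
`f k = f (k-1) + 2` for `-t ≤ k ≤ 0`; consequently `f k = 2(t - |k|) + 3` for
`|k| ≤ t + 1` and `f k = 0` for `|k| ≥ t + 2`. -/
theorem stmt7 (t : ℕ) (T : ℕ) (cfg : ℕ → ℤ → ℕ) (site : ℕ → ℤ)
    (hinit : cfg 0 = fun j => if j = 0 then 2 ^ (t + 2) else 0)
    (hstep : ∀ u < T, UExpFire t (cfg u) (cfg (u + 1)) (site u))
    (hcomplete : ∀ i : ℤ, cfg T i < Lnum t i + Rnum t i) :
    (∀ k : ℕ, k ≤ t → firings site T (k : ℤ) = firings site T ((k : ℤ) + 1) + 2) ∧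
    (∀ k : ℕ, k ≤ t → firings site T (-(k : ℤ)) = firings site T (-(k : ℤ) - 1) + 2) ∧
    (∀ k : ℤ, k.natAbs ≤ t + 1 →
      (firings site T k : ℤ) = 2 * ((t : ℤ) - (k.natAbs : ℤ)) + 3) ∧
    (∀ k : ℤ, t + 2 ≤ k.natAbs → firings site T k = 0) := by
  -- conservation law
  have key : ∀ u, u ≤ T → ∀ j : ℤ, (cfg u j : ℤ) =
      (if j = 0 then ((2:ℤ))^(t+2) else 0)
      + (Ecount t (j-1) : ℤ) * ((firings site u (j-1) : ℤ) - (firings site u j : ℤ))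
      + (Ecount t j : ℤ) * ((firings site u (j+1) : ℤ) - (firings site u j : ℤ)) := by
    intro u
    induction u with
    | zero =>
      intro _ j
      simp only [firings, Finset.range_zero, Finset.filter_empty, Finset.card_empty, hinit]
      push_cast
      split_ifs <;> ring
    | succ u ih =>
      intro hu j
      obtain ⟨hleg, hc⟩ := hstep u (by omega)
      set i := site u with hi
      have hcj := congrFun hc j
      simp only [Lnum, Rnum] at hcj hleg
      have ihj := ih (by omega) j
      rw [hcj]
      simp only [firings_succ, ← hi]
      by_cases h1 : j = i - 1
      · subst h1
        rw [if_pos rfl, if_neg (show ¬ (i = i-1-1) by omega),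
          if_neg (show ¬ (i = i-1) by omega), if_pos (show i = i-1+1 by omega)]
        push_cast
        linear_combination ihj
      · rw [if_neg h1]
        by_cases h2 : j = i + 1
        · subst h2
          rw [if_pos rfl, if_pos (show i = i+1-1 by omega),
            if_neg (show ¬ (i = i+1) by omega), if_neg (show ¬ (i = i+1+1) by omega)]
          rw [show i+1-1 = i by ring] at ihj ⊢
          push_cast
          linear_combination ihj
        · rw [if_neg h2]
          by_cases h3 : j = i
          · subst h3
            rw [if_pos rfl, if_neg (show ¬ (i = i-1) by omega), if_pos rfl,
              if_neg (show ¬ (i = i+1) by omega), Nat.cast_sub hleg]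
            push_cast
            linear_combination ihj
          · rw [if_neg h3, if_neg (show ¬ (i = j-1) by omega),
              if_neg (show ¬ (i = j) by omega), if_neg (show ¬ (i = j+1) by omega)]
            push_cast
            linear_combination ihj
  have hdeg : ∀ i : ℤ, (cfg T i : ℤ) ≤ (Ecount t (i-1) : ℤ) + (Ecount t i : ℤ) - 1 := by
    intro i
    have h := hcomplete i
    simp only [Lnum, Rnum] at h
    omega
  -- least action principle
  have lap : ∀ u, u ≤ T → ∀ k : ℤ, (firings site u k : ℤ) ≤ fstar t k := by
    intro u
    induction u with
    | zero => intro _ k; simp [firings, fstar_nonneg]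
    | succ u ih =>
      intro hu k
      rw [firings_succ]
      by_cases hk : site u = k
      · subst hk
        rw [if_pos rfl]
        obtain ⟨hleg, -⟩ := hstep u (by omega)
        simp only [Lnum, Rnum] at hleg
        have hcons := key u (by omega) (site u)
        have hs := stab t (site u)
        have ih1 := ih (by omega) (site u)
        have ih2 := ih (by omega) (site u - 1)
        have ih3 := ih (by omega) (site u + 1)
        push_cast
        by_contra hcon
        push_neg at hcon
        have hEq : (firings site u (site u) : ℤ) = fstar t (site u) := by omega
        have hE1 : (0:ℤ) ≤ (Ecount t (site u - 1) : ℤ) := Int.natCast_nonneg _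
        have hE2 : (0:ℤ) ≤ (Ecount t (site u) : ℤ) := Int.natCast_nonneg _
        have m1 : (Ecount t (site u - 1) : ℤ) *
              ((firings site u (site u - 1) : ℤ) - (firings site u (site u) : ℤ))
            ≤ (Ecount t (site u - 1) : ℤ) * (fstar t (site u - 1) - fstar t (site u)) :=
          mul_le_mul_of_nonneg_left (by linarith) hE1
        have m2 : (Ecount t (site u) : ℤ) *
              ((firings site u (site u + 1) : ℤ) - (firings site u (site u) : ℤ))
            ≤ (Ecount t (site u) : ℤ) * (fstar t (site u + 1) - fstar t (site u)) :=
          mul_le_mul_of_nonneg_left (by linarith) hE2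
        have hlegz : (Ecount t (site u - 1) : ℤ) + (Ecount t (site u) : ℤ)
            ≤ (cfg u (site u) : ℤ) := by exact_mod_cast hleg
        linarith
      · rw [if_neg hk]
        simpa using ih (by omega) k
  have lapT := lap T le_rfl
  have hkey := key T le_rfl
  set D : ℤ → ℤ := fun k => fstar t k - (firings site T k : ℤ) with hD
  have hd0 : ∀ k, 0 ≤ D k := fun k => by
    simp only [hD]; linarith [lapT k]
  have hdz : ∀ k : ℤ, t + 2 ≤ k.natAbs → D k = 0 := by
    intro k hk
    have h1 : fstar t k = 0 := by simp only [fstar]; split_ifs <;> omega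
    have h2 := lapT k
    rw [h1] at h2
    simp only [hD, h1]
    omega
  -- constraint extraction, positive side
  have hB : ∀ n : ℕ, 1 ≤ n → n ≤ t →
      D (n:ℤ) - D ((n:ℤ)+1) ≤ 2*(D ((n:ℤ)-1) - D (n:ℤ)) := by
    intro n h1n hnt
    have hc := hkey ((n:ℤ))
    have hs := hdeg ((n:ℤ))
    have e1 : (Ecount t ((n:ℤ) - 1) : ℤ) = 2 * 2 ^ (t - n) := by
      rw [show ((n:ℤ) - 1) = ((n-1:ℕ):ℤ) by omega, Ecount_nat t (n-1) (by omega),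
        show t - (n-1) = (t-n) + 1 by omega]
      push_cast [pow_succ]; ring
    have e2 : (Ecount t ((n:ℤ)) : ℤ) = 2 ^ (t - n) := by
      rw [Ecount_nat t n hnt]; push_cast; ring
    have f1 : fstar t ((n:ℤ) - 1) = fstar t (n:ℤ) + 2 := by
      simp only [fstar]; split_ifs <;> omega
    have f2 : fstar t ((n:ℤ) + 1) = fstar t (n:ℤ) - 2 := by
      simp only [fstar]; split_ifs <;> omega
    have r1 : (firings site T ((n:ℤ)-1) : ℤ) - (firings site T (n:ℤ) : ℤ)
        = 2 - (D ((n:ℤ)-1) - D (n:ℤ)) := by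
      simp only [hD]; linear_combination f1
    have r2 : (firings site T ((n:ℤ)+1) : ℤ) - (firings site T (n:ℤ) : ℤ)
        = -2 - (D ((n:ℤ)+1) - D (n:ℤ)) := by
      simp only [hD]; linear_combination f2
    rw [e1, e2, if_neg (by omega), r1, r2] at hc
    rw [e1, e2] at hs
    have hA : (1:ℤ) ≤ 2 ^ (t - n) := one_le_pow₀ (by norm_num)
    by_contra hcon
    push_neg at hcon
    have h9 : 1 ≤ -2*(D ((n:ℤ)-1) - D (n:ℤ)) - (D ((n:ℤ)+1) - D (n:ℤ)) := by omega
    have h10 := mul_le_mul_of_nonneg_left h9 (by positivity : (0:ℤ) ≤ 2 ^ (t-n))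
    linarith
  have hTT : D ((t:ℤ)+1) - D ((t:ℤ)+2) ≤ D (t:ℤ) - D ((t:ℤ)+1) := by
    have hc := hkey ((t:ℤ)+1)
    have hs := hdeg ((t:ℤ)+1)
    have e1 : (Ecount t (((t:ℤ)+1) - 1) : ℤ) = 1 := by
      rw [show (((t:ℤ)+1) - 1) = ((t:ℕ):ℤ) by ring, Ecount_nat t t le_rfl,
        Nat.sub_self, pow_zero, Nat.cast_one]
    have e2 : (Ecount t ((t:ℤ)+1) : ℤ) = 1 := by
      rw [Ecount_high t _ (by omega), Nat.cast_one]
    have f1 : fstar t (((t:ℤ)+1) - 1) = fstar t ((t:ℤ)+1) + 2 := by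
      simp only [fstar]; split_ifs <;> omega
    have f2 : fstar t (((t:ℤ)+1) + 1) = fstar t ((t:ℤ)+1) - 1 := by
      simp only [fstar]; split_ifs <;> omega
    have r1 : (firings site T (((t:ℤ)+1)-1) : ℤ) - (firings site T ((t:ℤ)+1) : ℤ)
        = 2 - (D (((t:ℤ)+1)-1) - D ((t:ℤ)+1)) := by
      simp only [hD]; linear_combination f1
    have r2 : (firings site T (((t:ℤ)+1)+1) : ℤ) - (firings site T ((t:ℤ)+1) : ℤ)
        = -1 - (D (((t:ℤ)+1)+1) - D ((t:ℤ)+1)) := by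
      simp only [hD]; linear_combination f2
    rw [e1, e2, if_neg (by omega), r1, r2] at hc
    rw [e1, e2] at hs
    rw [show ((t:ℤ)+1)-1 = (t:ℤ) by ring, show ((t:ℤ)+1)+1 = (t:ℤ)+2 by ring] at hc
    linarith
  have h01 : (D 0 - D 1) + (D 0 - D (-1)) ≤ 1 := by
    have hc := hkey 0
    have hs := hdeg 0
    have e1 : (Ecount t ((0:ℤ) - 1) : ℤ) = 2 ^ t := by
      rw [show ((0:ℤ) - 1) = -1 - ((0:ℕ):ℤ) by norm_num, Ecount_neg t 0 (by omega)]
      norm_num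
    have e2 : (Ecount t (0:ℤ) : ℤ) = 2 ^ t := by
      rw [show ((0:ℤ)) = ((0:ℕ):ℤ) by norm_num, Ecount_nat t 0 (by omega)]
      norm_num
    have f1 : fstar t ((0:ℤ) - 1) = fstar t 0 - 2 := by
      simp only [fstar]; split_ifs <;> omega
    have f2 : fstar t ((0:ℤ) + 1) = fstar t 0 - 2 := by
      simp only [fstar]; split_ifs <;> omega
    have r1 : (firings site T ((0:ℤ)-1) : ℤ) - (firings site T (0:ℤ) : ℤ)
        = -2 - (D ((0:ℤ)-1) - D 0) := by
      simp only [hD]; linear_combination f1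
    have r2 : (firings site T ((0:ℤ)+1) : ℤ) - (firings site T (0:ℤ) : ℤ)
        = -2 - (D ((0:ℤ)+1) - D 0) := by
      simp only [hD]; linear_combination f2
    rw [e1, e2, if_pos rfl, r1, r2] at hc
    rw [e1, e2] at hs
    rw [show (0:ℤ)-1 = (-1:ℤ) by ring, show (0:ℤ)+1 = (1:ℤ) by ring] at hc
    rw [show t+2 = t+1+1 by ring, pow_succ, pow_succ] at hc
    have hA : (1:ℤ) ≤ 2 ^ t := one_le_pow₀ (by norm_num)
    by_contra hcon
    push_neg at hcon
    have h9 : 2 ≤ -(D (-1) - D 0) - (D 1 - D 0) := by omega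
    have h10 := mul_le_mul_of_nonneg_left h9 (by positivity : (0:ℤ) ≤ 2 ^ t)
    linarith
  -- constraint extraction, negative side
  have hBm : ∀ n : ℕ, 1 ≤ n → n ≤ t →
      D (-(n:ℤ)) - D (-((n:ℤ)+1)) ≤ 2*(D (-((n:ℤ)-1)) - D (-(n:ℤ))) := by
    intro n h1n hnt
    have hc := hkey (-(n:ℤ))
    have hs := hdeg (-(n:ℤ))
    have e1 : (Ecount t ((-(n:ℤ)) - 1) : ℤ) = 2 ^ (t - n) := by
      rw [show ((-(n:ℤ)) - 1) = -1 - ((n:ℕ):ℤ) by ring, Ecount_neg t n hnt]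
      push_cast; ring
    have e2 : (Ecount t (-(n:ℤ)) : ℤ) = 2 * 2 ^ (t - n) := by
      rw [show (-(n:ℤ)) = -1 - ((n-1:ℕ):ℤ) by omega, Ecount_neg t (n-1) (by omega),
        show t - (n-1) = (t-n) + 1 by omega]
      push_cast [pow_succ]; ring
    have f1 : fstar t ((-(n:ℤ)) - 1) = fstar t (-(n:ℤ)) - 2 := by
      simp only [fstar]; split_ifs <;> omega
    have f2 : fstar t ((-(n:ℤ)) + 1) = fstar t (-(n:ℤ)) + 2 := by
      simp only [fstar]; split_ifs <;> omega
    have r1 : (firings site T ((-(n:ℤ))-1) : ℤ) - (firings site T (-(n:ℤ)) : ℤ)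
        = -2 - (D ((-(n:ℤ))-1) - D (-(n:ℤ))) := by
      simp only [hD]; linear_combination f1
    have r2 : (firings site T ((-(n:ℤ))+1) : ℤ) - (firings site T (-(n:ℤ)) : ℤ)
        = 2 - (D ((-(n:ℤ))+1) - D (-(n:ℤ))) := by
      simp only [hD]; linear_combination f2
    rw [e1, e2, if_neg (by omega), r1, r2] at hc
    rw [e1, e2] at hs
    rw [show -((n:ℤ)+1) = -(n:ℤ) - 1 by ring, show -((n:ℤ)-1) = -(n:ℤ) + 1 by ring]
    have hA : (1:ℤ) ≤ 2 ^ (t - n) := one_le_pow₀ (by norm_num)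
    by_contra hcon
    push_neg at hcon
    have h9 : 1 ≤ -(D ((-(n:ℤ))-1) - D (-(n:ℤ))) - 2*(D ((-(n:ℤ))+1) - D (-(n:ℤ))) := by omega
    have h10 := mul_le_mul_of_nonneg_left h9 (by positivity : (0:ℤ) ≤ 2 ^ (t-n))
    linarith
  have hTm : D (-((t:ℤ)+1)) - D (-((t:ℤ)+2)) ≤ D (-(t:ℤ)) - D (-((t:ℤ)+1)) := by
    have hc := hkey (-((t:ℤ)+1))
    have hs := hdeg (-((t:ℤ)+1))
    have e1 : (Ecount t ((-((t:ℤ)+1)) - 1) : ℤ) = 1 := by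
      rw [Ecount_low t _ (by omega), Nat.cast_one]
    have e2 : (Ecount t (-((t:ℤ)+1)) : ℤ) = 1 := by
      rw [show (-((t:ℤ)+1)) = -1 - ((t:ℕ):ℤ) by ring, Ecount_neg t t le_rfl,
        Nat.sub_self, pow_zero, Nat.cast_one]
    have f1 : fstar t ((-((t:ℤ)+1)) - 1) = fstar t (-((t:ℤ)+1)) - 1 := by
      simp only [fstar]; split_ifs <;> omega
    have f2 : fstar t ((-((t:ℤ)+1)) + 1) = fstar t (-((t:ℤ)+1)) + 2 := by
      simp only [fstar]; split_ifs <;> omega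
    have r1 : (firings site T ((-((t:ℤ)+1))-1) : ℤ) - (firings site T (-((t:ℤ)+1)) : ℤ)
        = -1 - (D ((-((t:ℤ)+1))-1) - D (-((t:ℤ)+1))) := by
      simp only [hD]; linear_combination f1
    have r2 : (firings site T ((-((t:ℤ)+1))+1) : ℤ) - (firings site T (-((t:ℤ)+1)) : ℤ)
        = 2 - (D ((-((t:ℤ)+1))+1) - D (-((t:ℤ)+1))) := by
      simp only [hD]; linear_combination f2
    rw [e1, e2, if_neg (by omega), r1, r2] at hc
    rw [e1, e2] at hs
    rw [show -((t:ℤ)+2) = (-((t:ℤ)+1)) - 1 by ring, show -(t:ℤ) = (-((t:ℤ)+1)) + 1 by ring]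
    linarith
  -- combine
  have hmain : ∀ k : ℤ, D k = 0 := by
    have right : D 0 ≤ D 1 → ∀ k : ℤ, 0 ≤ k → D k = 0 :=
      fun h => sideZero t D hd0 (fun k hk => hdz k (by omega)) hB hTT h
    have left : D 0 ≤ D (-1) → ∀ k : ℤ, k ≤ 0 → D k = 0 := by
      intro h k hk
      have hz := sideZero t (fun k => D (-k)) (fun k => hd0 _)
        (fun k hk2 => hdz (-k) (by omega)) hBm hTm (by simpa using h) (-k) (by omega)
      simpa using hz
    rcases le_or_gt (D 0) (D 1) with h | h
    · have hr := right h
      have hl := left (by rw [hr 0 le_rfl]; exact hd0 (-1))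
      intro k
      rcases le_or_gt 0 k with hk | hk
      exacts [hr k hk, hl k (by omega)]
    · have hl := left (by omega)
      have hr := right (by have h00 := hl 0 le_rfl; rw [h00]; exact hd0 1)
      intro k
      rcases le_or_gt 0 k with hk | hk
      exacts [hr k hk, hl k (by omega)]
  have Feq : ∀ k : ℤ, (firings site T k : ℤ) = fstar t k := by
    intro k
    have h := hmain k
    simp only [hD] at h
    omega
  refine ⟨?_, ?_, ?_, ?_⟩
  · intro k hk
    have e1 := Feq (k:ℤ)
    have e2 := Feq ((k:ℤ)+1)
    simp only [fstar] at e1 e2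
    split_ifs at e1 e2 <;> omega
  · intro k hk
    have e1 := Feq (-(k:ℤ))
    have e2 := Feq (-(k:ℤ)-1)
    simp only [fstar] at e1 e2
    split_ifs at e1 e2 <;> omega
  · intro k hk
    have e1 := Feq k
    simp only [fstar] at e1
    split_ifs at e1 <;> omega
  · intro k hk
    have e1 := Feq k
    simp only [fstar] at e1
    split_ifs at e1 <;> omega
end

section
/- Consider unlabeled exponential-edge chip-firing with parameter t ≥ 0, starting from 2^{t+2} chips at site 0, and any complete firing sequence. For every k with 1 ≤ k ≤ t+1 and every j with 1 ≤ j ≤ 2(t−k)+3, the j-th firing at site k (counting chronologically from the first) occurs after the (j+1)-th firing at site k−1 and before the (j+2)-th firing at site k−1; symmetrically, for every k with −t−1 ≤ k ≤ −1 and every j with 1 ≤ j ≤ 2(t−|k|)+3, the j-th firing at site k occurs after the (j+1)-th firing at site k+1 and before the (j+2)-th firing at site k+1. Moreover, every firing move in the sequence, with the exception of the first firing at each of the sites −t,…,t, occurs with exactly L(i)+R(i) chips present at the fired site i, and hence leaves 0 chips at that site. -/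
/-- `u` is the time of the `j`-th firing at site `s`, counting chronologically
from the first. -/
def NthFiring (site : ℕ → ℤ) (T : ℕ) (s : ℤ) (j : ℕ) (u : ℕ) : Prop :=
  u < T ∧ site u = s ∧
    ((Finset.range u).filter (fun v => site v = s)).card = j - 1

/-!
Write `f k` for the number of firings at site `k` so far. Counting chips at a site `k ≠ 0`
gives `chips(k) + (L + R) f(k) = L f(k-1) + R f(k+1)`, and since `L(k) ≤ 2 R(k)` for `k > 0`,
legality of a firing at `k` forces `f(k-1) = f(k) + 2` and `f(k+1) ∈ {f(k) - 1, 0}`; at the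
origin it forces `f(±1) = f(0) - 1` once `f(0) > 0`. By induction along the sequence these
relations (with the caps `f(±k) ≤ 2t + 3 - 2k`) are invariant. The interlacing is
`f(k-1) = f(k) + 2` read at each firing of `k`, and substituting the counts back into the
chip count gives exactly `L + R` chips except at the first firing of a site `|k| ≤ t`.
Negative sites follow by the reflection `k ↦ -k`.
-/

open Finset Function

lemma Ecount_neg_sub_one (t : ℕ) (k : ℤ) : Ecount t (-k - 1) = Ecount t k := by
  unfold Ecount
  rw [show -(-k - 1) - 1 = k by ring]
  split_ifs <;> first | rfl | omega

lemma Ecount_natCast {t k : ℕ} (h : k ≤ t) : Ecount t k = 2 ^ (t - k) := by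
  simp [Ecount, h]

lemma Ecount_of_le {t : ℕ} {k : ℤ} (h : (t : ℤ) ≤ k) : Ecount t k = 1 := by
  unfold Ecount
  split_ifs <;> first | omega | simp [show t - k.toNat = 0 by omega]

lemma Lnum_neg (t : ℕ) (i : ℤ) : Lnum t (-i) = Rnum t i := by
  simpa [Lnum, Rnum] using Ecount_neg_sub_one t i

lemma Rnum_neg (t : ℕ) (i : ℤ) : Rnum t (-i) = Lnum t i := by
  simpa [Lnum, Rnum] using Ecount_neg_sub_one t (i - 1)

lemma Lnum_add_one (t : ℕ) (i : ℤ) : Lnum t (i + 1) = Rnum t i := by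
  simp [Lnum, Rnum]

lemma Rnum_sub_one (t : ℕ) (i : ℤ) : Rnum t (i - 1) = Lnum t i := rfl

lemma Lnum_eq_two_mul_Rnum {t m : ℕ} (h1 : 1 ≤ m) (h : m ≤ t) :
    Lnum t m = 2 * Rnum t m := by
  rw [Lnum, Rnum, show (m : ℤ) - 1 = (m - 1 : ℕ) by omega, Ecount_natCast h,
    Ecount_natCast (by omega), show t - (m - 1) = t - m + 1 by omega, pow_succ, mul_comm]

lemma Rnum_zero (t : ℕ) : Rnum t 0 = 2 ^ t := by
  simpa [Rnum] using Ecount_natCast (t := t) (k := 0) (Nat.zero_le t)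

lemma Lnum_zero (t : ℕ) : Lnum t 0 = 2 ^ t := by
  rw [← Rnum_zero, ← Lnum_neg, neg_zero]

lemma Rnum_pos (t : ℕ) (i : ℤ) : 0 < Rnum t i := by
  unfold Rnum Ecount
  split_ifs <;> positivity

lemma Lnum_eq_one_of_lt {t m : ℕ} (h : t < m) : Lnum t m = 1 :=
  Ecount_of_le (by omega)

lemma Rnum_eq_one_of_lt {t m : ℕ} (h : t < m) : Rnum t m = 1 :=
  Ecount_of_le (by omega)

def firingCount (site : ℕ → ℤ) (s : ℤ) (u : ℕ) : ℕ := #{v ∈ range u | site v = s}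

lemma firingCount_succ (site : ℕ → ℤ) (s : ℤ) (u : ℕ) :
    firingCount site s (u + 1) = firingCount site s u + if site u = s then 1 else 0 := by
  unfold firingCount
  rw [range_add_one, filter_insert]
  split_ifs with h
  · rw [card_insert_of_notMem (by simp)]
  · rfl

lemma firingCount_mono (site : ℕ → ℤ) (s : ℤ) : Monotone (firingCount site s) :=
  fun _ _ h => card_le_card (filter_subset_filter _ (range_subset_range.2 h))

lemma firingCount_neg (site : ℕ → ℤ) (s : ℤ) (u : ℕ) :
    firingCount (fun v => -site v) s u = firingCount site (-s) u := by
  simp only [firingCount, neg_eq_iff_eq_neg]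

lemma firingCount_comp_succ {site : ℕ → ℤ} {e : ℕ → ℤ} (he : Injective e) {u m : ℕ}
    (h : site u = e m) :
    (fun k => firingCount site (e k) (u + 1))
      = update (fun k => firingCount site (e k) u) m (firingCount site (e m) u + 1) := by
  funext k
  rcases eq_or_ne k m with rfl | hk
  · simp [firingCount_succ, h]
  · simp [firingCount_succ, h, hk, he.ne_iff, Ne.symm hk]

lemma firingCount_comp_succ_of_notMem {site : ℕ → ℤ} {e : ℕ → ℤ} {u : ℕ}
    (h : ∀ k, site u ≠ e k) :
    (fun k => firingCount site (e k) (u + 1)) = fun k => firingCount site (e k) u := by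
  funext k
  simp [firingCount_succ, h k]

lemma UExpFire.neg {t : ℕ} {c c' : ℤ → ℕ} {i : ℤ} (h : UExpFire t c c' i) :
    UExpFire t (fun k => c (-k)) (fun k => c' (-k)) (-i) := by
  obtain ⟨hle, rfl⟩ := h
  refine ⟨by simpa [Lnum_neg, Rnum_neg, add_comm] using hle, ?_⟩
  funext k
  simp only [Lnum_neg, Rnum_neg]
  by_cases e1 : k = -i - 1 <;> by_cases e2 : k = -i + 1 <;> by_cases e3 : k = -i <;>
    simp only [e1, e2, e3, if_true, if_false] <;> split_ifs <;> omega

lemma UExpFire.apply_self {t : ℕ} {c c' : ℤ → ℕ} {i : ℤ} (h : UExpFire t c c' i) :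
    c' i = c i - (Lnum t i + Rnum t i) := by
  rw [h.2]
  simp only [if_neg (show i ≠ i - 1 by omega), if_neg (show i ≠ i + 1 by omega), if_true]

lemma NthFiring.lt_iff_le_firingCount {site : ℕ → ℤ} {T : ℕ} {s : ℤ} {i u v : ℕ}
    (hv : NthFiring site T s i v) (hi : 1 ≤ i) (hu : site u ≠ s) :
    v < u ↔ i ≤ firingCount site s u := by
  obtain ⟨-, hsv, hcount⟩ := hv
  change firingCount site s v = i - 1 at hcount
  constructor
  · intro h
    have := firingCount_mono site s (Nat.succ_le_of_lt h)
    rw [firingCount_succ, if_pos hsv] at this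
    omega
  · intro h
    have hne : u ≠ v := by rintro rfl; exact hu hsv
    by_contra h'
    have := firingCount_mono site s (show u ≤ v by omega)
    omega

lemma nthFiring_neg (site : ℕ → ℤ) (T : ℕ) (s : ℤ) (j u : ℕ) :
    NthFiring (fun v => -site v) T s j u ↔ NthFiring site T (-s) j u := by
  simp only [NthFiring, neg_eq_iff_eq_neg]

/-- `g k` counts the firings at the `k`-th site out from the origin on one side. The cap is
truncated subtraction: it forces `g k = 0` for `k ≥ t + 2`. -/
def OutwardProfile (t : ℕ) (g : ℕ → ℕ) : Prop :=
  ∀ k, g k ≤ g (k + 1) + 2 ∧ (g (k + 1) = 0 ∨ g (k + 1) < g k) ∧ g k ≤ 2 * t + 3 - 2 * k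

lemma OutwardProfile.update {t : ℕ} {g : ℕ → ℕ} (hg : OutwardProfile t g) {m : ℕ}
    (hnext : g m ≤ g (m + 1) + 1) (hprev : ∀ k, k + 1 = m → g k = g m + 2)
    (hcap : g m + 1 ≤ 2 * t + 3 - 2 * m) :
    OutwardProfile t (update g m (g m + 1)) := by
  intro k
  obtain ⟨h1, h2, h3⟩ := hg k
  rcases eq_or_ne k m with rfl | hk
  · simp only [update_self, update_of_ne (show k + 1 ≠ k by omega)]
    omega
  rcases eq_or_ne (k + 1) m with rfl | hk'
  · have := hprev k rfl
    simp only [update_self, update_of_ne hk]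
    omega
  · simp only [update_of_ne hk, update_of_ne hk']
    exact hg k

def GridInv (t : ℕ) (site : ℕ → ℤ) (u : ℕ) : Prop :=
  OutwardProfile t (fun k => firingCount site k u) ∧
    OutwardProfile t (fun k => firingCount site (-k) u)

lemma gridInv_neg_iff {t : ℕ} {site : ℕ → ℤ} {u : ℕ} :
    GridInv t (fun v => -site v) u ↔ GridInv t site u := by
  simp only [GridInv, firingCount_neg, neg_neg]
  exact and_comm

def centralPile (t : ℕ) (k : ℤ) : ℕ := if k = 0 then 2 ^ (t + 2) else 0

def IsFiringSeq (t T : ℕ) (cfg : ℕ → ℤ → ℕ) (site : ℕ → ℤ) : Prop :=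
  ∀ u < T, UExpFire t (cfg u) (cfg (u + 1)) (site u)

section FiringSeq

variable {t T : ℕ} {cfg : ℕ → ℤ → ℕ} {site : ℕ → ℤ}

lemma IsFiringSeq.neg (hs : IsFiringSeq t T cfg site) :
    IsFiringSeq t T (fun u k => cfg u (-k)) (fun u => -site u) :=
  fun u hu => (hs u hu).neg

/-- A firing of `k - 1` sends `Rnum t (k - 1) = Lnum t k` chips to `k`, and a firing of `k + 1`
sends `Lnum t (k + 1) = Rnum t k`. -/
lemma IsFiringSeq.chips_add_fired (hs : IsFiringSeq t T cfg site) {u : ℕ} (hu : u ≤ T) (k : ℤ) :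
    (cfg u k : ℤ) + (Lnum t k + Rnum t k) * firingCount site k u
      = cfg 0 k + Lnum t k * firingCount site (k - 1) u
        + Rnum t k * firingCount site (k + 1) u := by
  induction u with
  | zero => simp [firingCount]
  | succ u ih =>
    obtain ⟨hle, hcfg⟩ := hs u (by omega)
    specialize ih (by omega)
    rw [hcfg]
    simp only [firingCount_succ]
    generalize site u = i at hle ⊢
    split_ifs <;> first | omega | subst_vars
    all_goals
      simp only [sub_add_cancel, add_sub_cancel_right, Lnum_add_one, Rnum_sub_one, Nat.cast_add,
        Nat.cast_sub hle, Nat.cast_zero, Nat.cast_one] at ih ⊢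
      linarith

lemma comp_neg_eq_centralPile (hinit : cfg 0 = centralPile t) :
    (fun u k => cfg u (-k)) 0 = centralPile t := by
  funext k
  simp [hinit, centralPile]

lemma IsFiringSeq.fire_pos (hs : IsFiringSeq t T cfg site) (hinit : cfg 0 = centralPile t)
    {u : ℕ} (hu : u < T) (hg : OutwardProfile t fun k => firingCount site k u) {m : ℕ}
    (hm : 1 ≤ m) (hsite : site u = m) :
    firingCount site (m - 1) u = firingCount site m u + 2 ∧
    firingCount site m u ≤ firingCount site (m + 1) u + 1 ∧
    firingCount site m u + 1 ≤ 2 * t + 3 - 2 * m ∧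
    (0 < firingCount site m u ∨ t < m → cfg u m = Lnum t m + Rnum t m) := by
  have hcons := hs.chips_add_fired hu.le m
  have hlegal := (hs u hu).1
  rw [hsite] at hlegal
  obtain ⟨hab, -, hcapa⟩ := hg (m - 1)
  obtain ⟨-, hbc, -⟩ := hg m
  obtain ⟨-, -, hcapc⟩ := hg (m + 1)
  simp only [show ((m - 1 : ℕ) : ℤ) = m - 1 by omega, show m - 1 + 1 = m by omega,
    Nat.cast_add, Nat.cast_one] at hab hcapa hcapc hbc
  simp only [hinit, centralPile, Nat.cast_eq_zero, show m ≠ 0 by omega, if_false,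
    Nat.cast_zero, zero_add] at hcons
  set a := firingCount site (m - 1) u
  set b := firingCount site m u
  set c := firingCount site (m + 1) u
  rcases le_or_gt m t with hmt | hmt
  · rw [Lnum_eq_two_mul_Rnum hm hmt] at hcons hlegal ⊢
    set w := Rnum t m
    have hw : (0 : ℤ) < w := by exact_mod_cast Rnum_pos t m
    zify at hlegal
    push_cast at hcons
    -- legality in the chip count; with `a ≤ b + 2` and `c ≤ b` it is tight
    have key : (w : ℤ) * (3 + 3 * b) ≤ w * (2 * a + c) := by linarith
    have key := le_of_mul_le_mul_left key hw
    refine ⟨by omega, by omega, by omega, fun h => ?_⟩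
    have ha : (a : ℤ) = b + 2 := by omega
    have hc : (c : ℤ) = b - 1 := by omega
    zify
    linear_combination hcons + 2 * w * ha + w * hc
  · rw [Lnum_eq_one_of_lt hmt, Rnum_eq_one_of_lt hmt] at hcons hlegal ⊢
    push_cast at hcons
    -- the cap gives `c = 0`, so `2 + 2b ≤ a ≤ b + 2` forces `b = 0`
    refine ⟨by omega, by omega, by omega, fun _ => by omega⟩

lemma IsFiringSeq.fire_zero (hs : IsFiringSeq t T cfg site) (hinit : cfg 0 = centralPile t)
    {u : ℕ} (hu : u < T) (hI : GridInv t site u) (hsite : site u = 0) :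
    firingCount site 0 u ≤ firingCount site 1 u + 1 ∧
    firingCount site 0 u ≤ firingCount site (-1) u + 1 ∧
    firingCount site 0 u + 1 ≤ 2 * t + 3 ∧
    (0 < firingCount site 0 u → cfg u 0 = Lnum t 0 + Rnum t 0) := by
  have hcons := hs.chips_add_fired hu.le 0
  have hlegal := (hs u hu).1
  rw [hsite] at hlegal
  obtain ⟨-, hbc, hcapb⟩ := hI.1 0
  obtain ⟨-, -, hcapc⟩ := hI.1 1
  obtain ⟨-, hbc', -⟩ := hI.2 0
  simp only [Nat.cast_one, neg_zero, zero_add, CharP.cast_eq_zero] at hbc hcapb hcapc hbc'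
  simp only [hinit, centralPile, if_true, zero_sub, zero_add, Lnum_zero, Rnum_zero] at hcons hlegal ⊢
  set b := firingCount site 0 u
  set c := firingCount site 1 u
  set c' := firingCount site (-1) u
  have hw : (0 : ℤ) < 2 ^ t := by positivity
  zify at hlegal
  push_cast [pow_add] at hcons
  have key : (2 : ℤ) ^ t * (2 + 2 * b) ≤ 2 ^ t * (4 + c + c') := by linarith
  have key := le_of_mul_le_mul_left key hw
  refine ⟨by omega, by omega, by omega, fun h => ?_⟩
  have hc : (c : ℤ) = b - 1 := by omega
  have hc' : (c' : ℤ) = b - 1 := by omega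
  zify
  linear_combination hcons + 2 ^ t * hc + 2 ^ t * hc'

lemma IsFiringSeq.gridInv_succ_of_pos (hs : IsFiringSeq t T cfg site)
    (hinit : cfg 0 = centralPile t) {u : ℕ} (hu : u < T) (hI : GridInv t site u) {m : ℕ}
    (hm : 1 ≤ m) (hsite : site u = m) : GridInv t site (u + 1) := by
  obtain ⟨hprev, hnext, hcap, -⟩ := hs.fire_pos hinit hu hI.1 hm hsite
  constructor
  · rw [firingCount_comp_succ (e := ((↑) : ℕ → ℤ)) Nat.cast_injective hsite]
    refine hI.1.update (by exact_mod_cast hnext) (fun k hk => ?_) hcap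
    subst hk
    simpa using hprev
  · rw [firingCount_comp_succ_of_notMem (e := fun k : ℕ => -(k : ℤ)) (fun k => by omega)]
    exact hI.2

lemma IsFiringSeq.gridInv_succ_of_zero (hs : IsFiringSeq t T cfg site)
    (hinit : cfg 0 = centralPile t) {u : ℕ} (hu : u < T) (hI : GridInv t site u)
    (hsite : site u = 0) : GridInv t site (u + 1) := by
  obtain ⟨hnext, hnext', hcap, -⟩ := hs.fire_zero hinit hu hI hsite
  constructor
  · rw [firingCount_comp_succ (e := ((↑) : ℕ → ℤ)) (m := 0) Nat.cast_injective (by simpa)]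
    exact hI.1.update (by simpa) (by simp) (by simp; omega)
  · rw [firingCount_comp_succ (e := fun k : ℕ => -(k : ℤ)) (m := 0)
      (neg_injective.comp Nat.cast_injective) (by simpa)]
    exact hI.2.update (by simpa) (by simp) (by simp; omega)

theorem IsFiringSeq.gridInv (hs : IsFiringSeq t T cfg site) (hinit : cfg 0 = centralPile t)
    {u : ℕ} (hu : u ≤ T) : GridInv t site u := by
  induction u with
  | zero => simp [GridInv, OutwardProfile, firingCount]
  | succ u ih =>
    have hu : u < T := by omega
    have hI := ih hu.le
    rcases lt_trichotomy (site u) 0 with hneg | hzero | hpos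
    · rw [← gridInv_neg_iff]
      exact hs.neg.gridInv_succ_of_pos (comp_neg_eq_centralPile hinit) hu
        (gridInv_neg_iff.2 hI) (m := (-site u).toNat) (by omega) (by simp; omega)
    · exact hs.gridInv_succ_of_zero hinit hu hI hzero
    · exact hs.gridInv_succ_of_pos hinit hu hI (m := (site u).toNat) (by omega) (by omega)

theorem IsFiringSeq.nthFiring_interlace (hs : IsFiringSeq t T cfg site)
    (hinit : cfg 0 = centralPile t) {k j : ℕ} (hk : 1 ≤ k) (hj : 1 ≤ j) :
    (∀ u v, NthFiring site T k j u → NthFiring site T (k - 1) (j + 1) v → v < u) ∧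
    (∀ u w, NthFiring site T k j u → NthFiring site T (k - 1) (j + 2) w → u < w) := by
  have hcount : ∀ u, NthFiring site T k j u →
      site u ≠ k - 1 ∧ firingCount site (k - 1) u = j + 1 := by
    rintro u ⟨hu, hsite, hj'⟩
    have := (hs.fire_pos hinit hu (hs.gridInv hinit hu.le).1 hk hsite).1
    change firingCount site k u = j - 1 at hj'
    exact ⟨by omega, by omega⟩
  refine ⟨fun u v hu hv => ?_, fun u w hu hw => ?_⟩
  · obtain ⟨hne, hc⟩ := hcount u hu
    exact (hv.lt_iff_le_firingCount (by omega) hne).2 (by omega)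
  · obtain ⟨hne, hc⟩ := hcount u hu
    have hwu := (hw.lt_iff_le_firingCount (by omega) hne).not.2 (by omega)
    have : u ≠ w := by rintro rfl; exact hne hw.2.1
    omega

theorem IsFiringSeq.chips_eq_of_not_first (hs : IsFiringSeq t T cfg site)
    (hinit : cfg 0 = centralPile t) {u : ℕ} (hu : u < T)
    (h : ¬(firingCount site (site u) u = 0 ∧ (site u).natAbs ≤ t)) :
    cfg u (site u) = Lnum t (site u) + Rnum t (site u) := by
  rcases lt_trichotomy (site u) 0 with hneg | hzero | hpos
  · obtain ⟨m, hm⟩ : ∃ m : ℕ, -site u = m := ⟨(-site u).toNat, by omega⟩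
    have := (hs.neg.fire_pos (comp_neg_eq_centralPile hinit) hu
      (hs.neg.gridInv (comp_neg_eq_centralPile hinit) hu.le).1 (by omega) hm).2.2.2
    rw [← hm, firingCount_neg, neg_neg, Lnum_neg, Rnum_neg] at this
    rw [add_comm]
    exact this (by omega)
  · rw [hzero] at h ⊢
    exact (hs.fire_zero hinit hu (hs.gridInv hinit hu.le) hzero).2.2.2 (by simp_all; omega)
  · obtain ⟨m, hm⟩ : ∃ m : ℕ, site u = m := ⟨(site u).toNat, by omega⟩
    rw [hm] at h ⊢
    exact (hs.fire_pos hinit hu (hs.gridInv hinit hu.le).1 (by omega) hm).2.2.2 (by omega)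

end FiringSeq

theorem stmt8_general (t : ℕ) (T : ℕ) (cfg : ℕ → ℤ → ℕ) (site : ℕ → ℤ)
    (hinit : cfg 0 = fun j => if j = 0 then 2 ^ (t + 2) else 0)
    (hstep : ∀ u < T, UExpFire t (cfg u) (cfg (u + 1)) (site u)) :
    (∀ k : ℕ, 1 ≤ k → k ≤ t + 1 → ∀ j : ℕ, 1 ≤ j → (j : ℤ) ≤ 2 * ((t : ℤ) - (k : ℤ)) + 3 →
      (∀ u v, NthFiring site T (k : ℤ) j u → NthFiring site T ((k : ℤ) - 1) (j + 1) v → v < u) ∧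
      (∀ u w, NthFiring site T (k : ℤ) j u → NthFiring site T ((k : ℤ) - 1) (j + 2) w → u < w)) ∧
    (∀ k : ℕ, 1 ≤ k → k ≤ t + 1 → ∀ j : ℕ, 1 ≤ j → (j : ℤ) ≤ 2 * ((t : ℤ) - (k : ℤ)) + 3 →
      (∀ u v, NthFiring site T (-(k : ℤ)) j u → NthFiring site T (-(k : ℤ) + 1) (j + 1) v → v < u) ∧
      (∀ u w, NthFiring site T (-(k : ℤ)) j u → NthFiring site T (-(k : ℤ) + 1) (j + 2) w → u < w)) ∧
    (∀ u, u < T →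
      ¬((((Finset.range u).filter (fun v => site v = site u)).card = 0 ∧ (site u).natAbs ≤ t)) →
      cfg u (site u) = Lnum t (site u) + Rnum t (site u) ∧ cfg (u + 1) (site u) = 0) := by
  have hs : IsFiringSeq t T cfg site := hstep
  refine ⟨fun k hk _ j hj _ => hs.nthFiring_interlace hinit hk hj, fun k hk _ j hj _ => ?_,
    fun u hu h => ?_⟩
  · have := hs.neg.nthFiring_interlace (comp_neg_eq_centralPile hinit) hk hj
    simpa only [nthFiring_neg, neg_sub, neg_add_eq_sub] using this
  · have hchips := hs.chips_eq_of_not_first hinit hu h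
    refine ⟨hchips, ?_⟩
    rw [(hs u hu).apply_self, hchips, Nat.sub_self]

/-- Grid structure for exponential-edge chip-firing with `2^(t+2)` chips at the
origin.  In every complete firing sequence: for `1 ≤ k ≤ t + 1` and
`1 ≤ j ≤ 2(t-k) + 3`, the `j`-th firing at site `k` occurs after the `(j+1)`-th
firing at site `k - 1` and before the `(j+2)`-th firing at site `k - 1`;
symmetrically for the negative sites; and every firing move except the first
firing at each of the sites `-t, …, t` occurs with exactly
`Lnum (site) + Rnum (site)` chips present, hence leaves `0` chips behind. -/
theorem stmt8 (t : ℕ) (T : ℕ) (cfg : ℕ → ℤ → ℕ) (site : ℕ → ℤ)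
    (hinit : cfg 0 = fun j => if j = 0 then 2 ^ (t + 2) else 0)
    (hstep : ∀ u < T, UExpFire t (cfg u) (cfg (u + 1)) (site u))
    (hcomplete : ∀ i : ℤ, cfg T i < Lnum t i + Rnum t i) :
    (∀ k : ℕ, 1 ≤ k → k ≤ t + 1 → ∀ j : ℕ, 1 ≤ j → (j : ℤ) ≤ 2 * ((t : ℤ) - (k : ℤ)) + 3 →
      (∀ u v, NthFiring site T (k : ℤ) j u → NthFiring site T ((k : ℤ) - 1) (j + 1) v → v < u) ∧
      (∀ u w, NthFiring site T (k : ℤ) j u → NthFiring site T ((k : ℤ) - 1) (j + 2) w → u < w)) ∧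
    (∀ k : ℕ, 1 ≤ k → k ≤ t + 1 → ∀ j : ℕ, 1 ≤ j → (j : ℤ) ≤ 2 * ((t : ℤ) - (k : ℤ)) + 3 →
      (∀ u v, NthFiring site T (-(k : ℤ)) j u → NthFiring site T (-(k : ℤ) + 1) (j + 1) v → v < u) ∧
      (∀ u w, NthFiring site T (-(k : ℤ)) j u → NthFiring site T (-(k : ℤ) + 1) (j + 2) w → u < w)) ∧
    (∀ u, u < T →
      ¬((((Finset.range u).filter (fun v => site v = site u)).card = 0 ∧ (site u).natAbs ≤ t)) →
      cfg u (site u) = Lnum t (site u) + Rnum t (site u) ∧ cfg (u + 1) (site u) = 0) :=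
  stmt8_general t T cfg site hinit hstep
end

section
/- Consider labeled exponential-edge chip-firing with parameter t ≥ 0, starting from 2^{t+2} chips with distinct integer labels at site 0, and any complete firing sequence. For every k with 0 ≤ k ≤ t and every j with 2 ≤ j ≤ 2(t−k)+3, immediately after the j-th firing at site k (counting chronologically from the first), the 2^{t−k} chips of largest label all have position greater than k. Symmetrically, for every k with −t ≤ k ≤ 0 and every j with 2 ≤ j ≤ 2(t−|k|)+3, immediately after the j-th firing at site k, the 2^{t−|k|} chips of smallest label all have position less than k. -/
/-- A labeled exponential-edge firing move at site `i`: `Lnum t i + Rnum t i`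
distinct chips at site `i` are chosen; the `Lnum t i` chosen chips of smallest
label move to `i - 1` and the `Rnum t i` chosen chips of largest label move to
`i + 1`; all other chips stay put. -/
def LabExpFire (t : ℕ) {ι : Type} (label : ι → ℤ) (c c' : ι → ℤ) (i : ℤ) : Prop :=
  ∃ Sl Sr : Finset ι, Disjoint Sl Sr ∧ Sl.card = Lnum t i ∧ Sr.card = Rnum t i ∧
    (∀ a ∈ Sl, c a = i) ∧ (∀ a ∈ Sr, c a = i) ∧
    (∀ a ∈ Sl, ∀ b ∈ Sr, label a < label b) ∧
    (∀ a ∈ Sl, c' a = i - 1) ∧ (∀ a ∈ Sr, c' a = i + 1) ∧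
    (∀ x : ι, x ∉ Sl → x ∉ Sr → c' x = c x)

namespace S9

/-! ### Ecount facts -/

lemma Ecount_pos (t : ℕ) (k : ℤ) : 1 ≤ Ecount t k := by
  unfold Ecount
  split_ifs <;> first | exact Nat.one_le_two_pow | exact le_refl 1

lemma Ecount_mirror (t : ℕ) (k : ℤ) : Ecount t (-k - 1) = Ecount t k := by
  unfold Ecount
  split_ifs <;>
    first
    | rfl
    | omega
    | (congr 1 <;> omega)

lemma Ecount_L_le_2R (t : ℕ) (i : ℤ) (hi : 1 ≤ i) : Ecount t (i - 1) ≤ 2 * Ecount t i := by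
  have h1 := Nat.one_le_two_pow (n := t - i.toNat)
  have h2 := Nat.one_le_two_pow (n := t - (-i - 1).toNat)
  unfold Ecount
  split_ifs <;> try omega
  · have : t - (i-1).toNat = (t - i.toNat) + 1 ∨ t - (i-1).toNat = t - i.toNat := by omega
    rcases this with h | h <;> rw [h]
    · rw [pow_succ]; omega
    · omega
  · have : t - (i-1).toNat = 0 := by omega
    rw [this]; omega

lemma Ecount_R_le_2L (t : ℕ) (i : ℤ) (hi : i ≤ -1) : Ecount t i ≤ 2 * Ecount t (i - 1) := by
  have h1 := Nat.one_le_two_pow (n := t - (-(i-1)-1).toNat)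
  have h2 := Nat.one_le_two_pow (n := t - (i-1).toNat)
  unfold Ecount
  split_ifs <;> try omega
  · have : t - (-i-1).toNat = (t - (-(i-1)-1).toNat) + 1 ∨ t - (-i-1).toNat = t - (-(i-1)-1).toNat := by omega
    rcases this with h | h <;> rw [h]
    · rw [pow_succ]; omega
    · omega
  · have : t - (-i-1).toNat = 0 := by omega
    rw [this]; omega

lemma Ecount_neg_one (t : ℕ) : Ecount t (-1) = 2 ^ t := by
  unfold Ecount
  split_ifs <;> first | omega | (congr 1 <;> omega)

lemma Ecount_zero (t : ℕ) : Ecount t 0 = 2 ^ t := by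
  unfold Ecount
  split_ifs <;> first | omega | (congr 1 <;> omega)

lemma Ecount_nat (t k : ℕ) (hk : k ≤ t) : Ecount t (k : ℤ) = 2 ^ (t - k) := by
  unfold Ecount
  split_ifs <;> first | omega | (congr 1 <;> omega)

/-! ### firing counts and chip counts -/

noncomputable section

def F (site : ℕ → ℤ) (s : ℤ) (u : ℕ) : ℤ :=
  (((Finset.range u).filter (fun v => site v = s)).card : ℤ)

lemma F_zero (site : ℕ → ℤ) (s : ℤ) : F site s 0 = 0 := by simp [F]

lemma F_nonneg (site : ℕ → ℤ) (s : ℤ) (u : ℕ) : 0 ≤ F site s u := by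
  simp [F]

lemma F_succ (site : ℕ → ℤ) (s : ℤ) (u : ℕ) :
    F site s (u + 1) = F site s u + (if site u = s then 1 else 0) := by
  unfold F
  rw [Finset.range_add_one, Finset.filter_insert]
  split_ifs with h
  · rw [Finset.card_insert_of_notMem (by simp)]; push_cast; ring
  · simp

def cnt {ι : Type} [Fintype ι] (c : ι → ℤ) (s : ℤ) : ℤ :=
  ((Finset.univ.filter (fun a => c a = s)).card : ℤ)

lemma cnt_eq_sum {ι : Type} [Fintype ι] (c : ι → ℤ) (s : ℤ) :
    cnt c s = ∑ a, (if c a = s then (1:ℤ) else 0) := by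
  unfold cnt
  rw [Finset.card_filter]
  push_cast
  exact Finset.sum_congr rfl (fun a _ => by split_ifs <;> simp)

variable {t : ℕ} {ι : Type} [Fintype ι] [DecidableEq ι] {label c c' : ι → ℤ} {i : ℤ}

lemma fire_lower (h : LabExpFire t label c c' i) :
    (Lnum t i : ℤ) + (Rnum t i : ℤ) ≤ cnt c i := by
  obtain ⟨Sl, Sr, hdisj, hcl, hcr, hSl, hSr, hlab, hSl', hSr', hrest⟩ := h
  have hsub : Sl ∪ Sr ⊆ Finset.univ.filter (fun a => c a = i) := by
    intro a ha
    rcases Finset.mem_union.mp ha with h | h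
    · simp [hSl a h]
    · simp [hSr a h]
  have := Finset.card_le_card hsub
  rw [Finset.card_union_of_disjoint hdisj, hcl, hcr] at this
  unfold cnt
  exact_mod_cast this

lemma fire_cnt (h : LabExpFire t label c c' i) (s : ℤ) :
    cnt c' s = cnt c s
      + (Lnum t i : ℤ) * ((if i - 1 = s then 1 else 0) - (if i = s then 1 else 0))
      + (Rnum t i : ℤ) * ((if i + 1 = s then 1 else 0) - (if i = s then 1 else 0)) := by
  obtain ⟨Sl, Sr, hdisj, hcl, hcr, hSl, hSr, hlab, hSl', hSr', hrest⟩ := h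
  have key : ∀ a : ι, (if c' a = s then (1:ℤ) else 0) =
      (if c a = s then (1:ℤ) else 0)
      + (if a ∈ Sl then ((if i - 1 = s then (1:ℤ) else 0) - (if i = s then 1 else 0)) else 0)
      + (if a ∈ Sr then ((if i + 1 = s then (1:ℤ) else 0) - (if i = s then 1 else 0)) else 0) := by
    intro a
    by_cases hl : a ∈ Sl
    · have hr : a ∉ Sr := fun hh => (Finset.disjoint_left.mp hdisj hl hh)
      rw [if_pos hl, if_neg hr, hSl' a hl, hSl a hl]
      ring
    · by_cases hr : a ∈ Sr
      · rw [if_neg hl, if_pos hr, hSr' a hr, hSr a hr]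
        ring
      · rw [if_neg hl, if_neg hr, hrest a hl hr]
        ring
  rw [cnt_eq_sum, cnt_eq_sum]
  rw [Finset.sum_congr rfl (fun a _ => key a)]
  rw [Finset.sum_add_distrib, Finset.sum_add_distrib]
  congr 1
  · congr 1
    rw [Finset.sum_ite_mem, Finset.univ_inter, Finset.sum_const, hcl]
    simp [mul_comm]
  · rw [Finset.sum_ite_mem, Finset.univ_inter, Finset.sum_const, hcr]
    simp [mul_comm]

lemma delta_eq (t : ℕ) (i s : ℤ) :
    (Lnum t i : ℤ) * ((if i - 1 = s then 1 else 0) - (if i = s then 1 else 0))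
      + (Rnum t i : ℤ) * ((if i + 1 = s then 1 else 0) - (if i = s then 1 else 0))
    = (Lnum t s : ℤ) * (if i = s - 1 then 1 else 0)
      + (Rnum t s : ℤ) * (if i = s + 1 then 1 else 0)
      - ((Lnum t s : ℤ) + (Rnum t s : ℤ)) * (if i = s then 1 else 0) := by
  rcases eq_or_ne i s with rfl | hC
  · rw [if_neg (show ¬(i - 1 = i) by omega), if_pos (show i = i from rfl),
        if_neg (show ¬(i + 1 = i) by omega), if_neg (show ¬(i = i - 1) by omega),
        if_neg (show ¬(i = i + 1) by omega)]
    push_cast; ring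
  · rcases eq_or_ne s (i + 1) with rfl | hA
    · rw [if_neg (show ¬(i - 1 = i + 1) by omega), if_neg (show ¬(i = i + 1) by omega),
          if_pos (show i + 1 = i + 1 from rfl), if_pos (show i = i + 1 - 1 by omega),
          if_neg (show ¬(i = i + 1 + 1) by omega)]
      simp only [Lnum, Rnum, add_sub_cancel_right]; ring
    · rcases eq_or_ne s (i - 1) with rfl | hB
      · rw [if_pos (show i - 1 = i - 1 from rfl), if_neg (show ¬(i = i - 1) by omega),
            if_neg (show ¬(i + 1 = i - 1) by omega), if_neg (show ¬(i = i - 1 - 1) by omega),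
            if_pos (show i = i - 1 + 1 by omega)]
        simp only [Lnum, Rnum]; ring
      · rw [if_neg (show ¬(i - 1 = s) by omega), if_neg (show ¬(i = s) by omega),
            if_neg (show ¬(i + 1 = s) by omega), if_neg (show ¬(i = s - 1) by omega),
            if_neg (show ¬(i = s + 1) by omega)]
        ring

end

/-! ### run-global facts -/

section Run

variable {t T : ℕ} {cfg : ℕ → Fin (2 ^ (t + 2)) → ℤ} {site : ℕ → ℤ}
  {label : Fin (2 ^ (t + 2)) → ℤ}

/-- conservation: chip count at each site as a function of firing counts -/
lemma cnt_formula (hinit : ∀ a, cfg 0 a = 0)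
    (hstep : ∀ u < T, LabExpFire t label (cfg u) (cfg (u + 1)) (site u)) :
    ∀ u, u ≤ T → ∀ s : ℤ, cnt (cfg u) s =
      (if s = 0 then ((2:ℤ) ^ (t + 2)) else 0)
      + (Lnum t s : ℤ) * F site (s - 1) u + (Rnum t s : ℤ) * F site (s + 1) u
      - ((Lnum t s : ℤ) + (Rnum t s : ℤ)) * F site s u := by
  intro u
  induction u with
  | zero =>
    intro _ s
    have hfe : (Finset.univ.filter (fun a => cfg 0 a = s))
        = if s = 0 then (Finset.univ : Finset (Fin (2 ^ (t + 2)))) else ∅ := by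
      split_ifs with hs
      · subst hs; ext a; simp [hinit a]
      · ext a
        simp only [Finset.mem_filter, Finset.mem_univ, true_and, Finset.notMem_empty,
          iff_false]
        rw [hinit a]; omega
    unfold cnt
    rw [hfe]
    split_ifs with hs <;>
      simp [F_zero, Finset.card_univ, Fintype.card_fin] <;> push_cast <;> ring
  | succ u IH =>
    intro hu s
    have hu' : u < T := by omega
    rw [fire_cnt (hstep u hu') s, IH (by omega) s, F_succ, F_succ, F_succ]
    linear_combination (delta_eq t (site u) s)

/-- the invariant on firing counts -/
def Inv (site : ℕ → ℤ) (u : ℕ) : Prop :=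
  (∀ s : ℤ, 1 ≤ s → F site (s - 1) u ≤ F site s u + 2) ∧
  (∀ s : ℤ, 1 ≤ s → 1 ≤ F site s u → F site s u + 1 ≤ F site (s - 1) u) ∧
  (∀ s : ℤ, s ≤ -1 → F site (s + 1) u ≤ F site s u + 2) ∧
  (∀ s : ℤ, s ≤ -1 → 1 ≤ F site s u → F site s u + 1 ≤ F site (s + 1) u)

lemma dropR {u : ℕ} (h : Inv site u) (s : ℤ) (hs : 0 ≤ s) (h1 : 1 ≤ F site s u) :
    F site (s + 1) u ≤ F site s u - 1 := by
  by_cases h2 : 1 ≤ F site (s + 1) u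
  · have := h.2.1 (s + 1) (by omega) h2
    rw [show s + 1 - 1 = s by ring] at this
    omega
  · have := F_nonneg site (s + 1) u
    omega

lemma dropL {u : ℕ} (h : Inv site u) (s : ℤ) (hs : s ≤ 0) (h1 : 1 ≤ F site s u) :
    F site (s - 1) u ≤ F site s u - 1 := by
  by_cases h2 : 1 ≤ F site (s - 1) u
  · have := h.2.2.2 (s - 1) (by omega) h2
    rw [show s - 1 + 1 = s by ring] at this
    omega
  · have := F_nonneg site (s - 1) u
    omega

lemma monoR {u : ℕ} (h : Inv site u) (s : ℤ) (hs : 1 ≤ s) :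
    F site s u ≤ F site (s - 1) u := by
  by_cases h2 : 1 ≤ F site s u
  · have := h.2.1 s hs h2; omega
  · have := F_nonneg site s u
    have := F_nonneg site (s - 1) u
    omega

lemma monoL {u : ℕ} (h : Inv site u) (s : ℤ) (hs : s ≤ -1) :
    F site s u ≤ F site (s + 1) u := by
  by_cases h2 : 1 ≤ F site s u
  · have := h.2.2.2 s hs h2; omega
  · have := F_nonneg site s u
    have := F_nonneg site (s + 1) u
    omega

section Pfacts

variable (hinit : ∀ a, cfg 0 a = 0)
  (hstep : ∀ u < T, LabExpFire t label (cfg u) (cfg (u + 1)) (site u))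
  {u : ℕ} (hu : u < T) (hinv : Inv site u)

include hinit hstep hu hinv

lemma P1 (hi : 1 ≤ site u) : F site (site u) u + 2 ≤ F site (site u - 1) u := by
  set i := site u with hidef
  have hIN := fire_lower (hstep u hu)
  rw [cnt_formula hinit hstep u (le_of_lt hu) i] at hIN
  rw [if_neg (show ¬(i = 0) by omega)] at hIN
  have hL : (1:ℤ) ≤ (Lnum t i : ℤ) := by exact_mod_cast Ecount_pos t (i - 1)
  have hR : (1:ℤ) ≤ (Rnum t i : ℤ) := by exact_mod_cast Ecount_pos t i
  have hmono : F site (i + 1) u ≤ F site i u := by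
    have := monoR hinv (i + 1) (by omega)
    rw [show i + 1 - 1 = i by ring] at this
    exact this
  by_contra hc
  push_neg at hc
  have e1 : (Rnum t i : ℤ) * (F site (i + 1) u - F site i u) ≤ 0 :=
    mul_nonpos_of_nonneg_of_nonpos (by linarith) (by linarith)
  have e2 : (Lnum t i : ℤ) * (F site (i - 1) u - F site i u) ≤ (Lnum t i : ℤ) * 1 :=
    mul_le_mul_of_nonneg_left (by omega) (by linarith)
  nlinarith

lemma P1' (hi : site u ≤ -1) : F site (site u) u + 2 ≤ F site (site u + 1) u := by
  set i := site u with hidef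
  have hIN := fire_lower (hstep u hu)
  rw [cnt_formula hinit hstep u (le_of_lt hu) i] at hIN
  rw [if_neg (show ¬(i = 0) by omega)] at hIN
  have hL : (1:ℤ) ≤ (Lnum t i : ℤ) := by exact_mod_cast Ecount_pos t (i - 1)
  have hR : (1:ℤ) ≤ (Rnum t i : ℤ) := by exact_mod_cast Ecount_pos t i
  have hmono : F site (i - 1) u ≤ F site i u := by
    have := monoL hinv (i - 1) (by omega)
    rw [show i - 1 + 1 = i by ring] at this
    exact this
  by_contra hc
  push_neg at hc
  have e1 : (Lnum t i : ℤ) * (F site (i - 1) u - F site i u) ≤ 0 :=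
    mul_nonpos_of_nonneg_of_nonpos (by linarith) (by linarith)
  have e2 : (Rnum t i : ℤ) * (F site (i + 1) u - F site i u) ≤ (Rnum t i : ℤ) * 1 :=
    mul_le_mul_of_nonneg_left (by omega) (by linarith)
  nlinarith

lemma P2 (hi : 1 ≤ site u) : F site (site u) u ≤ F site (site u + 1) u + 1 := by
  set i := site u with hidef
  have hIN := fire_lower (hstep u hu)
  rw [cnt_formula hinit hstep u (le_of_lt hu) i] at hIN
  rw [if_neg (show ¬(i = 0) by omega)] at hIN
  have hL : (1:ℤ) ≤ (Lnum t i : ℤ) := by exact_mod_cast Ecount_pos t (i - 1)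
  have hR : (1:ℤ) ≤ (Rnum t i : ℤ) := by exact_mod_cast Ecount_pos t i
  have hLR : (Lnum t i : ℤ) ≤ 2 * (Rnum t i : ℤ) := by
    exact_mod_cast Ecount_L_le_2R t i hi
  have hA : F site (i - 1) u ≤ F site i u + 2 := hinv.1 i hi
  by_contra hc
  push_neg at hc
  have e1 : (Lnum t i : ℤ) * (F site (i - 1) u - F site i u) ≤ (Lnum t i : ℤ) * 2 :=
    mul_le_mul_of_nonneg_left (by omega) (by linarith)
  have e2 : (Rnum t i : ℤ) * (F site (i + 1) u - F site i u) ≤ (Rnum t i : ℤ) * (-2) :=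
    mul_le_mul_of_nonneg_left (by omega) (by linarith)
  nlinarith

lemma P2' (hi : site u ≤ -1) : F site (site u) u ≤ F site (site u - 1) u + 1 := by
  set i := site u with hidef
  have hIN := fire_lower (hstep u hu)
  rw [cnt_formula hinit hstep u (le_of_lt hu) i] at hIN
  rw [if_neg (show ¬(i = 0) by omega)] at hIN
  have hL : (1:ℤ) ≤ (Lnum t i : ℤ) := by exact_mod_cast Ecount_pos t (i - 1)
  have hR : (1:ℤ) ≤ (Rnum t i : ℤ) := by exact_mod_cast Ecount_pos t i
  have hRL : (Rnum t i : ℤ) ≤ 2 * (Lnum t i : ℤ) := by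
    exact_mod_cast Ecount_R_le_2L t i hi
  have hA : F site (i + 1) u ≤ F site i u + 2 := hinv.2.2.1 i hi
  by_contra hc
  push_neg at hc
  have e1 : (Rnum t i : ℤ) * (F site (i + 1) u - F site i u) ≤ (Rnum t i : ℤ) * 2 :=
    mul_le_mul_of_nonneg_left (by omega) (by linarith)
  have e2 : (Lnum t i : ℤ) * (F site (i - 1) u - F site i u) ≤ (Lnum t i : ℤ) * (-2) :=
    mul_le_mul_of_nonneg_left (by omega) (by linarith)
  nlinarith

lemma P3 (hi : site u = 0) (hf : 1 ≤ F site 0 u) :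
    F site 0 u ≤ F site 1 u + 1 ∧ F site 0 u ≤ F site (-1) u + 1 := by
  have hIN := fire_lower (hstep u hu)
  rw [cnt_formula hinit hstep u (le_of_lt hu) (site u)] at hIN
  rw [hi] at hIN
  rw [if_pos rfl] at hIN
  have hL : (Lnum t (0:ℤ) : ℤ) = 2 ^ t := by
    have : Lnum t (0:ℤ) = Ecount t (-1) := by norm_num [Lnum]
    rw [this, Ecount_neg_one]; push_cast; ring
  have hR : (Rnum t (0:ℤ) : ℤ) = 2 ^ t := by
    rw [show Rnum t (0:ℤ) = Ecount t 0 from rfl, Ecount_zero]; push_cast; ring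
  rw [hL, hR] at hIN
  have hp : (0:ℤ) < 2 ^ t := by positivity
  have hd1 : F site (0 + 1) u ≤ F site 0 u - 1 := dropR hinv 0 le_rfl hf
  have hd2 : F site (0 - 1) u ≤ F site 0 u - 1 := dropL hinv 0 le_rfl hf
  norm_num at hd1 hd2 hIN
  constructor
  · by_contra hc
    push_neg at hc
    have e1 : (2:ℤ) ^ t * F site 1 u ≤ 2 ^ t * (F site 0 u - 2) :=
      mul_le_mul_of_nonneg_left (by omega) (by positivity)
    have e2 : (2:ℤ) ^ t * F site (-1) u ≤ 2 ^ t * (F site 0 u - 1) :=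
      mul_le_mul_of_nonneg_left (by omega) (by positivity)
    have hpow : ((2:ℤ) ^ (t + 2)) = 4 * 2 ^ t := by rw [pow_add]; ring
    nlinarith
  · by_contra hc
    push_neg at hc
    have e1 : (2:ℤ) ^ t * F site (-1) u ≤ 2 ^ t * (F site 0 u - 2) :=
      mul_le_mul_of_nonneg_left (by omega) (by positivity)
    have e2 : (2:ℤ) ^ t * F site 1 u ≤ 2 ^ t * (F site 0 u - 1) :=
      mul_le_mul_of_nonneg_left (by omega) (by positivity)
    have hpow : ((2:ℤ) ^ (t + 2)) = 4 * 2 ^ t := by rw [pow_add]; ring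
    nlinarith

lemma KEY (hi0 : 0 ≤ site u) (hf : 1 ≤ F site (site u) u) :
    cnt (cfg u) (site u) ≤ (Lnum t (site u) : ℤ) + (Rnum t (site u) : ℤ) := by
  set i := site u with hidef
  rw [cnt_formula hinit hstep u (le_of_lt hu) i]
  rcases eq_or_lt_of_le hi0 with h0 | hpos
  · -- i = 0
    rw [← h0] at hf ⊢
    rw [if_pos rfl]
    have hL : (Lnum t (0:ℤ) : ℤ) = 2 ^ t := by
      have : Lnum t (0:ℤ) = Ecount t (-1) := by norm_num [Lnum]
      rw [this, Ecount_neg_one]; push_cast; ring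
    have hR : (Rnum t (0:ℤ) : ℤ) = 2 ^ t := by
      rw [show Rnum t (0:ℤ) = Ecount t 0 from rfl, Ecount_zero]; push_cast; ring
    rw [hL, hR]
    have hd1 : F site (0 + 1) u ≤ F site 0 u - 1 := dropR hinv 0 le_rfl (by exact_mod_cast hf)
    have hd2 : F site (0 - 1) u ≤ F site 0 u - 1 := dropL hinv 0 le_rfl (by exact_mod_cast hf)
    norm_num at hd1 hd2 ⊢
    have e1 : (2:ℤ) ^ t * F site 1 u ≤ 2 ^ t * (F site 0 u - 1) :=
      mul_le_mul_of_nonneg_left (by omega) (by positivity)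
    have e2 : (2:ℤ) ^ t * F site (-1) u ≤ 2 ^ t * (F site 0 u - 1) :=
      mul_le_mul_of_nonneg_left (by omega) (by positivity)
    have hpow : ((2:ℤ) ^ (t + 2)) = 4 * 2 ^ t := by rw [pow_add]; ring
    nlinarith
  · -- 1 ≤ i
    rw [if_neg (show ¬(i = 0) by omega)]
    have hL : (1:ℤ) ≤ (Lnum t i : ℤ) := by exact_mod_cast Ecount_pos t (i - 1)
    have hR : (1:ℤ) ≤ (Rnum t i : ℤ) := by exact_mod_cast Ecount_pos t i
    have hLR : (Lnum t i : ℤ) ≤ 2 * (Rnum t i : ℤ) := by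
      exact_mod_cast Ecount_L_le_2R t i (by omega)
    have hA : F site (i - 1) u ≤ F site i u + 2 := hinv.1 i (by omega)
    have hd : F site (i + 1) u ≤ F site i u - 1 := dropR hinv i (by omega) hf
    have e1 : (Lnum t i : ℤ) * F site (i - 1) u ≤ (Lnum t i : ℤ) * (F site i u + 2) :=
      mul_le_mul_of_nonneg_left (by omega) (by linarith)
    have e2 : (Rnum t i : ℤ) * F site (i + 1) u ≤ (Rnum t i : ℤ) * (F site i u - 1) :=
      mul_le_mul_of_nonneg_left (by omega) (by linarith)
    nlinarith

end Pfacts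

/-- the invariant holds throughout the run -/
lemma inv_all (hinit : ∀ a, cfg 0 a = 0)
    (hstep : ∀ u < T, LabExpFire t label (cfg u) (cfg (u + 1)) (site u)) :
    ∀ u, u ≤ T → Inv site u := by
  intro u
  induction u with
  | zero =>
    intro _
    refine ⟨?_, ?_, ?_, ?_⟩ <;> intro s hs <;> rw [F_zero, F_zero] <;> omega
  | succ u IH =>
    intro hu
    have hu' : u < T := by omega
    have hinv := IH (by omega)
    refine ⟨?_, ?_, ?_, ?_⟩
    · -- A-right
      intro s hs
      rw [F_succ, F_succ]
      by_cases h1 : site u = s - 1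
      · rw [if_pos h1, if_neg (show ¬(site u = s) by omega)]
        rcases eq_or_lt_of_le hs with h2 | h2
        · -- s = 1, site u = 0
          by_cases h3 : 1 ≤ F site 0 u
          · have := (P3 hinit hstep hu' hinv (by omega) h3).1
            rw [show s - 1 = (0:ℤ) by omega, show s = (1:ℤ) by omega]
            omega
          · have hn := F_nonneg site (s - 1) u
            have h0 : F site (s - 1) u = 0 := by
              rw [show s - 1 = (0:ℤ) by omega]
              have := F_nonneg site 0 u; omega
            have := F_nonneg site s u
            omega
        · -- 2 ≤ s, site u = s - 1 ≥ 1
          have := P2 hinit hstep hu' hinv (by omega)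
          rw [h1, show s - 1 + 1 = s by ring] at this
          omega
      · rw [if_neg h1]
        have := hinv.1 s hs
        split_ifs <;> omega
    · -- B-right
      intro s hs
      rw [F_succ, F_succ]
      by_cases h2 : site u = s
      · rw [if_pos h2, if_neg (show ¬(site u = s - 1) by omega)]
        intro _
        have := P1 hinit hstep hu' hinv (by omega)
        rw [h2] at this
        omega
      · rw [if_neg h2]
        intro hf
        rw [add_zero] at hf
        have := hinv.2.1 s hs hf
        split_ifs <;> omega
    · -- A-left
      intro s hs
      rw [F_succ, F_succ]
      by_cases h1 : site u = s + 1
      · rw [if_pos h1, if_neg (show ¬(site u = s) by omega)]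
        rcases eq_or_lt_of_le hs with h2 | h2
        · -- s = -1, site u = 0
          by_cases h3 : 1 ≤ F site 0 u
          · have := (P3 hinit hstep hu' hinv (by omega) h3).2
            rw [show s + 1 = (0:ℤ) by omega, show s = (-1:ℤ) by omega]
            omega
          · have h0 : F site (s + 1) u = 0 := by
              rw [show s + 1 = (0:ℤ) by omega]
              have := F_nonneg site 0 u; omega
            have := F_nonneg site s u
            omega
        · -- s ≤ -2, site u = s + 1 ≤ -1
          have := P2' hinit hstep hu' hinv (by omega)
          rw [h1, show s + 1 - 1 = s by ring] at this
          omega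
      · rw [if_neg h1]
        have := hinv.2.2.1 s hs
        split_ifs <;> omega
    · -- B-left
      intro s hs
      rw [F_succ, F_succ]
      by_cases h2 : site u = s
      · rw [if_pos h2, if_neg (show ¬(site u = s + 1) by omega)]
        intro _
        have := P1' hinit hstep hu' hinv (by omega)
        rw [h2] at this
        omega
      · rw [if_neg h2]
        intro hf
        rw [add_zero] at hf
        have := hinv.2.2.2 s hs hf
        split_ifs <;> omega


/-! ### labeled part -/

lemma sr_big (k : ℕ) (hk : k ≤ t) {i : ℤ} (h0 : 0 ≤ i) (hik : i ≤ (k:ℤ)) (a : Fin (2 ^ (t + 2)))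
    (Sr : Finset (Fin (2 ^ (t + 2)))) (hcr : Sr.card = Rnum t i)
    (hlab : ∀ b ∈ Sr, label a < label b)
    (hTop : (Finset.univ.filter (fun b => label a < label b)).card < 2 ^ (t - k)) : False := by
  have hsub : Sr ⊆ Finset.univ.filter (fun b => label a < label b) := by
    intro b hb
    simp [hlab b hb]
  have h1 := Finset.card_le_card hsub
  have h2 : 2 ^ (t - k) ≤ Rnum t i := by
    obtain ⟨n, rfl⟩ : ∃ n : ℕ, i = (n : ℤ) := ⟨i.toNat, by omega⟩
    have hn : n ≤ t := by omega
    rw [show Rnum t (n:ℤ) = Ecount t (n:ℤ) from rfl, Ecount_nat t n hn]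
    exact Nat.pow_le_pow_right (by norm_num) (by omega)
  omega

lemma S_step (hinit : ∀ a, cfg 0 a = 0)
    (hstep : ∀ u < T, LabExpFire t label (cfg u) (cfg (u + 1)) (site u))
    (k : ℕ) (hk : k ≤ t) (u : ℕ) (hu : u < T) (hsite : site u = (k:ℤ))
    (hf : 1 ≤ F site (k:ℤ) u)
    (hGu : ∀ a, (Finset.univ.filter (fun b => label a < label b)).card < 2 ^ (t - k) →
      (k:ℤ) ≤ cfg u a) :
    ∀ a, (Finset.univ.filter (fun b => label a < label b)).card < 2 ^ (t - k) →
      (k:ℤ) < cfg (u + 1) a := by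
  have hinv := inv_all hinit hstep u (le_of_lt hu)
  have hkey := KEY hinit hstep hu hinv (by rw [hsite]; positivity) (by rw [hsite]; exact hf)
  obtain ⟨Sl, Sr, hdisj, hcl, hcr, hSl, hSr, hlab, hSl', hSr', hrest⟩ := hstep u hu
  rw [hsite] at hkey hcl hcr hSl hSr hSl' hSr'
  have hexact : Sl ∪ Sr = Finset.univ.filter (fun b => cfg u b = (k:ℤ)) := by
    apply Finset.eq_of_subset_of_card_le
    · intro b hb
      rcases Finset.mem_union.mp hb with h | h
      · simp [hSl b h]
      · simp [hSr b h]
    · rw [Finset.card_union_of_disjoint hdisj, hcl, hcr]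
      have : cnt (cfg u) (k:ℤ) ≤ (Lnum t (k:ℤ) : ℤ) + (Rnum t (k:ℤ) : ℤ) := hkey
      unfold cnt at this
      exact_mod_cast this
  intro a hTop
  by_cases hca : cfg u a = (k:ℤ)
  · have ha : a ∈ Sl ∪ Sr := by
      rw [hexact]; simp [hca]
    rcases Finset.mem_union.mp ha with h | h
    · exact absurd (sr_big k hk (by positivity) le_rfl a Sr hcr (fun b hb => hlab a h b hb) hTop)
        (by simp)
    · rw [hSr' a h]; omega
  · have h1 : a ∉ Sl := fun h => hca (hSl a h)
    have h2 : a ∉ Sr := fun h => hca (hSr a h)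
    rw [hrest a h1 h2]
    have := hGu a hTop
    omega

lemma main_right (hinit : ∀ a, cfg 0 a = 0)
    (hstep : ∀ u < T, LabExpFire t label (cfg u) (cfg (u + 1)) (site u)) :
    ∀ k : ℕ, k ≤ t → ∀ u, u < T → site u = (k:ℤ) → 1 ≤ F site (k:ℤ) u →
      ∀ a, (Finset.univ.filter (fun b => label a < label b)).card < 2 ^ (t - k) →
        (k:ℤ) < cfg (u + 1) a := by
  intro k
  induction k with
  | zero =>
    intro _ u hu hsite hf
    -- G(0): top chips never strictly below 0
    have hG : ∀ v, v ≤ T → ∀ a,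
        (Finset.univ.filter (fun b => label a < label b)).card < 2 ^ (t - 0) →
        (0:ℤ) ≤ cfg v a := by
      intro v
      induction v with
      | zero => intro _ a _; rw [hinit a]
      | succ v IHv =>
        intro hv a hTop
        have hv' : v < T := by omega
        have hprev := IHv (by omega) a hTop
        obtain ⟨Sl, Sr, hdisj, hcl, hcr, hSl, hSr, hlab, hSl', hSr', hrest⟩ := hstep v hv'
        by_cases hl : a ∈ Sl
        · have hia : cfg v a = site v := hSl a hl
          rcases eq_or_lt_of_le (hia ▸ hprev) with h0 | h0
          · exact absurd (sr_big 0 (Nat.zero_le t) (by omega) (by push_cast; omega) a Sr hcr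
              (fun b hb => hlab a hl b hb) hTop) (by simp)
          · rw [hSl' a hl]; omega
        · by_cases hr : a ∈ Sr
          · rw [hSr' a hr]
            have := hSr a hr
            omega
          · rw [hrest a hl hr]; exact hprev
    exact S_step hinit hstep 0 (Nat.zero_le t) u hu hsite hf
      (fun a hTop => hG u (le_of_lt hu) a hTop)
  | succ k' IHk =>
    intro hk u hu hsite hf
    have hk' : k' ≤ t := by omega
    -- G(k'+1)
    have hG : ∀ v, v ≤ T → 3 ≤ F site (k':ℤ) v → ∀ a,
        (Finset.univ.filter (fun b => label a < label b)).card < 2 ^ (t - (k' + 1)) →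
        ((k' + 1 : ℕ):ℤ) ≤ cfg v a := by
      intro v
      induction v with
      | zero =>
        intro _ hC
        rw [F_zero] at hC
        omega
      | succ v IHv =>
        intro hv hC a hTop
        have hv' : v < T := by omega
        by_cases hCv : 3 ≤ F site (k':ℤ) v
        · have hprev := IHv (by omega) hCv a hTop
          obtain ⟨Sl, Sr, hdisj, hcl, hcr, hSl, hSr, hlab, hSl', hSr', hrest⟩ := hstep v hv'
          by_cases hl : a ∈ Sl
          · have hia : cfg v a = site v := hSl a hl
            rcases eq_or_lt_of_le (hia ▸ hprev) with h0 | h0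
            · exact absurd (sr_big (k' + 1) hk (by push_cast; omega) (by omega) a Sr hcr
                (fun b hb => hlab a hl b hb) hTop) (by simp)
            · rw [hSl' a hl]; omega
          · by_cases hr : a ∈ Sr
            · rw [hSr' a hr]
              have := hSr a hr
              have := hprev
              omega
            · rw [hrest a hl hr]; exact hprev
        · -- trigger: v is the third firing at k'
          have hFs := F_succ site (k':ℤ) v
          have hsv : site v = (k':ℤ) ∧ F site (k':ℤ) v = 2 := by
            rw [hFs] at hC
            split_ifs at hC with h
            · exact ⟨h, by omega⟩
            · omega
          have hTop' : (Finset.univ.filter (fun b => label a < label b)).card < 2 ^ (t - k') := by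
            have : (2:ℕ) ^ (t - (k' + 1)) ≤ 2 ^ (t - k') :=
              Nat.pow_le_pow_right (by norm_num) (by omega)
            omega
          have := IHk hk' v hv' hsv.1 (by rw [hsv.2]; omega) a hTop'
          push_cast
          omega
    -- now conclude S(k'+1) at u
    have hC : 3 ≤ F site (k':ℤ) u := by
      have hp1 := P1 hinit hstep hu (inv_all hinit hstep u (le_of_lt hu))
        (by rw [hsite]; push_cast; omega)
      rw [hsite] at hp1
      rw [show ((k' + 1 : ℕ):ℤ) - 1 = (k':ℤ) by push_cast; ring] at hp1
      have := F_nonneg site ((k' + 1 : ℕ):ℤ) u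
      have hf' : 1 ≤ F site ((k' + 1 : ℕ):ℤ) u := hf
      omega
    exact S_step hinit hstep (k' + 1) hk u hu hsite hf
      (fun a hTop => hG u (le_of_lt hu) hC a hTop)

/-- mirror of a firing move -/
lemma fire_mirror {ι : Type} {t : ℕ} {label c c' : ι → ℤ} {i : ℤ}
    (h : LabExpFire t label c c' i) :
    LabExpFire t (fun a => -label a) (fun a => -c a) (fun a => -c' a) (-i) := by
  obtain ⟨Sl, Sr, hdisj, hcl, hcr, hSl, hSr, hlab, hSl', hSr', hrest⟩ := h
  refine ⟨Sr, Sl, hdisj.symm, ?_, ?_, ?_, ?_, ?_, ?_, ?_, ?_⟩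
  · rw [hcr]
    show Rnum t i = Lnum t (-i)
    rw [show Lnum t (-i) = Ecount t (-i - 1) from rfl, Ecount_mirror t i]
    rfl
  · rw [hcl]
    show Lnum t i = Rnum t (-i)
    rw [show Rnum t (-i) = Ecount t (-i) from rfl,
      show (-i : ℤ) = -(i - 1) - 1 by ring, Ecount_mirror t (i - 1)]
    rfl
  · intro a ha; show -c a = -i; rw [hSr a ha]
  · intro a ha; show -c a = -i; rw [hSl a ha]
  · intro a ha b hb
    show -label a < -label b
    have := hlab b hb a ha
    omega
  · intro a ha; show -c' a = -i - 1; rw [hSr' a ha]; ring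
  · intro a ha; show -c' a = -i + 1; rw [hSl' a ha]; ring
  · intro x h1 h2
    show -c' x = -c x
    rw [hrest x h2 h1]

end Run


end S9

/-- Labeled exponential-edge chip-firing with `2^(t+2)` chips of distinct labels
at the origin, and any complete firing sequence: for `0 ≤ k ≤ t` and
`2 ≤ j ≤ 2(t-k) + 3`, immediately after the `j`-th firing at site `k` the
`2^(t-k)` chips of largest label all have position greater than `k`;
symmetrically, immediately after the `j`-th firing at site `-k` the `2^(t-k)`
chips of smallest label all have position less than `-k`. -/
theorem stmt9 (t : ℕ)
    (label : Fin (2 ^ (t + 2)) → ℤ) (hinj : Function.Injective label)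
    (T : ℕ) (cfg : ℕ → Fin (2 ^ (t + 2)) → ℤ) (site : ℕ → ℤ)
    (hinit : ∀ a, cfg 0 a = 0)
    (hstep : ∀ u < T, LabExpFire t label (cfg u) (cfg (u + 1)) (site u))
    (hcomplete : ∀ (i : ℤ) (c' : Fin (2 ^ (t + 2)) → ℤ), ¬ LabExpFire t label (cfg T) c' i) :
    (∀ k : ℕ, k ≤ t → ∀ j : ℕ, 2 ≤ j → j ≤ 2 * (t - k) + 3 →
      ∀ u, NthFiring site T (k : ℤ) j u →
        ∀ a, (Finset.univ.filter (fun b => label a < label b)).card < 2 ^ (t - k) →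
          (k : ℤ) < cfg (u + 1) a) ∧
    (∀ k : ℕ, k ≤ t → ∀ j : ℕ, 2 ≤ j → j ≤ 2 * (t - k) + 3 →
      ∀ u, NthFiring site T (-(k : ℤ)) j u →
        ∀ a, (Finset.univ.filter (fun b => label b < label a)).card < 2 ^ (t - k) →
          cfg (u + 1) a < -(k : ℤ)) := by
  constructor
  · intro k hk j hj2 _ u hN a hcard
    obtain ⟨huT, hsite, hcount⟩ := hN
    have hf : 1 ≤ S9.F site (k:ℤ) u := by
      unfold S9.F
      rw [hcount]
      have : 1 ≤ j - 1 := by omega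
      exact_mod_cast this
    exact S9.main_right hinit hstep k hk u huT hsite hf a hcard
  · intro k hk j hj2 _ u hN a hcard
    obtain ⟨huT, hsite, hcount⟩ := hN
    have hinit' : ∀ a, (fun w b => -cfg w b) 0 a = 0 := by
      intro a; show -cfg 0 a = 0; rw [hinit a]; ring
    have hstep' : ∀ v < T, LabExpFire t (fun b => -label b)
        ((fun w b => -cfg w b) v) ((fun w b => -cfg w b) (v + 1)) ((fun w => -site w) v) :=
      fun v hv => S9.fire_mirror (hstep v hv)
    have hsite' : (fun w => -site w) u = (k:ℤ) := by
      show -site u = (k:ℤ)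
      omega
    have hf : 1 ≤ S9.F (fun w => -site w) (k:ℤ) u := by
      unfold S9.F
      have hfe : (Finset.range u).filter (fun v => (fun w => -site w) v = (k:ℤ))
          = (Finset.range u).filter (fun v => site v = -(k:ℤ)) := by
        apply Finset.filter_congr
        intro v _
        show (-site v = (k:ℤ)) ↔ (site v = -(k:ℤ))
        omega
      rw [hfe, hcount]
      have : 1 ≤ j - 1 := by omega
      exact_mod_cast this
    have htop : (Finset.univ.filter
        (fun b => (fun x => -label x) a < (fun x => -label x) b)).card < 2 ^ (t - k) := by
      have hfe : (Finset.univ.filter (fun b => (fun x => -label x) a < (fun x => -label x) b))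
          = (Finset.univ.filter (fun b => label b < label a)) := by
        apply Finset.filter_congr
        intro b _
        show (-label a < -label b) ↔ (label b < label a)
        omega
      rw [hfe]
      exact hcard
    have := S9.main_right (cfg := fun w b => -cfg w b) (site := fun w => -site w)
      (label := fun b => -label b) hinit' hstep' k hk u huT hsite' hf a htop
    have h2 : (k:ℤ) < -cfg (u + 1) a := this
    omega
end

section
/- Consider unlabeled self-loop chip-firing on ℤ, starting from 4m−1 chips at site 0 (m ≥ 1). Every complete firing sequence ends at the configuration with exactly 1 chip at each of the sites −m, 0, and m, exactly 2 chips at each site k with 1 ≤ |k| ≤ m−1, and 0 chips at every other site. -/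
/-- An unlabeled self-loop firing of site `i`: legal when `i` holds at least 3
chips; `i` loses 2 chips and each neighbor gains 1 (one chip returns to `i`
via the self-loop). -/
def SLoopFire (c c' : ℤ → ℕ) (i : ℤ) : Prop :=
  3 ≤ c i ∧
  c' = fun j => if j = i - 1 then c j + 1
    else if j = i + 1 then c j + 1
    else if j = i then c j - 2
    else c j

/-- Odometer bound function: `(m - |k|)^2` truncated at 0. -/
def Uf (m : ℕ) (k : ℤ) : ℤ := (max ((m : ℤ) - |k|) 0) ^ 2

/-- Target configuration. -/
def tg (m : ℕ) (k : ℤ) : ℕ :=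
  if k = 0 ∨ k = (m : ℤ) ∨ k = -(m : ℤ) then 1
  else if k.natAbs < m then 2
  else 0

lemma Uf_nonneg (m : ℕ) (k : ℤ) : 0 ≤ Uf m k := sq_nonneg _

lemma Uf_eq_of_le (m : ℕ) (k : ℤ) (h : |k| ≤ m) : Uf m k = ((m : ℤ) - |k|) ^ 2 := by
  unfold Uf; rw [max_eq_left (by omega)]

lemma Uf_eq_zero (m : ℕ) (k : ℤ) (h : (m : ℤ) ≤ |k|) : Uf m k = 0 := by
  unfold Uf; rw [max_eq_right (by omega)]; ring

lemma tg_le (m : ℕ) (k : ℤ) : tg m k ≤ 2 := by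
  unfold tg; split <;> [omega; (split <;> omega)]

lemma key_id (m : ℕ) (hm : 1 ≤ m) (k : ℤ) :
    (if k = 0 then ((4 * m - 1 : ℕ) : ℤ) else 0) + Uf m (k + 1) + Uf m (k - 1)
      - 2 * Uf m k = (tg m k : ℤ) := by
  have hm' : (1 : ℤ) ≤ (m : ℤ) := by exact_mod_cast hm
  have hcast : ((4 * m - 1 : ℕ) : ℤ) = 4 * (m : ℤ) - 1 := by
    have : 1 ≤ 4 * m := by omega
    push_cast [this]; ring
  unfold tg
  rcases lt_trichotomy k 0 with hk | hk | hk
  · -- k < 0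
    rw [if_neg (by omega)]
    rcases lt_trichotomy k (-(m : ℤ)) with h1 | h1 | h1
    · rw [Uf_eq_zero m k (by rw [abs_of_neg hk]; omega),
        Uf_eq_zero m (k+1) (by rw [abs_of_nonpos (by omega)]; omega),
        Uf_eq_zero m (k-1) (by rw [abs_of_neg (by omega)]; omega),
        if_neg (by omega), if_neg (by omega)]
      simp
    · -- k = -m
      rw [Uf_eq_zero m k (by rw [abs_of_neg hk]; omega),
        Uf_eq_zero m (k-1) (by rw [abs_of_neg (by omega)]; omega),
        Uf_eq_of_le m (k+1) (by rw [abs_of_nonpos (by omega)]; omega),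
        if_pos (by omega), abs_of_nonpos (by omega)]
      subst h1
      push_cast
      ring
    · -- -m < k < 0
      rw [Uf_eq_of_le m k (by rw [abs_of_neg hk]; omega),
        Uf_eq_of_le m (k+1) (by rw [abs_of_nonpos (by omega)]; omega),
        Uf_eq_of_le m (k-1) (by rw [abs_of_neg (by omega)]; omega),
        abs_of_neg hk, abs_of_nonpos (by omega), abs_of_neg (by omega),
        if_neg (by omega), if_pos (by omega)]
      push_cast
      ring
  · -- k = 0
    subst hk
    rw [if_pos rfl, if_pos (Or.inl rfl), hcast,
      Uf_eq_of_le m (0+1) (by rw [show (0:ℤ)+1 = 1 by ring, abs_one]; omega),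
      Uf_eq_of_le m (0-1) (by rw [show (0:ℤ)-1 = -1 by ring, abs_neg, abs_one]; omega),
      Uf_eq_of_le m 0 (by simp)]
    norm_num
    ring
  · -- k > 0
    rw [if_neg (by omega)]
    rcases lt_trichotomy k (m : ℤ) with h1 | h1 | h1
    · -- 0 < k < m
      rw [Uf_eq_of_le m k (by rw [abs_of_pos hk]; omega),
        Uf_eq_of_le m (k+1) (by rw [abs_of_pos (by omega)]; omega),
        Uf_eq_of_le m (k-1) (by rw [abs_of_nonneg (by omega)]; omega),
        abs_of_pos hk, abs_of_pos (by omega), abs_of_nonneg (by omega),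
        if_neg (by omega), if_pos (by omega)]
      push_cast
      ring
    · -- k = m
      rw [Uf_eq_zero m k (by rw [abs_of_pos hk]; omega),
        Uf_eq_zero m (k+1) (by rw [abs_of_pos (by omega)]; omega),
        Uf_eq_of_le m (k-1) (by rw [abs_of_nonneg (by omega)]; omega),
        if_pos (by omega), abs_of_nonneg (by omega)]
      subst h1
      push_cast
      ring
    · -- k > m
      rw [Uf_eq_zero m k (by rw [abs_of_pos hk]; omega),
        Uf_eq_zero m (k+1) (by rw [abs_of_pos (by omega)]; omega),
        Uf_eq_zero m (k-1) (by rw [abs_of_nonneg (by omega)]; omega),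
        if_neg (by omega), if_neg (by omega)]
      simp

/-- Odometer: number of times site `i` was fired before time `v`. -/
def odo (site : ℕ → ℤ) (v : ℕ) (i : ℤ) : ℤ :=
  (((Finset.range v).filter (fun t => site t = i)).card : ℤ)

lemma odo_nonneg (site : ℕ → ℤ) (v : ℕ) (i : ℤ) : 0 ≤ odo site v i :=
  Int.ofNat_nonneg _

lemma odo_succ (site : ℕ → ℤ) (v : ℕ) (i : ℤ) :
    odo site (v+1) i = odo site v i + if site v = i then 1 else 0 := by
  unfold odo
  rw [Finset.range_add_one, Finset.filter_insert]
  split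
  · rw [Finset.card_insert_of_notMem (by simp)]
    push_cast; ring
  · simp

lemma cfg_formula (T : ℕ) (cfg : ℕ → ℤ → ℕ) (site : ℕ → ℤ)
    (hstep : ∀ u < T, SLoopFire (cfg u) (cfg (u + 1)) (site u)) :
    ∀ v, v ≤ T → ∀ k, (cfg v k : ℤ) =
      (cfg 0 k : ℤ) + odo site v (k+1) + odo site v (k-1) - 2 * odo site v k := by
  intro v
  induction v with
  | zero => intro _ k; simp [odo]
  | succ v ih =>
    intro hv k
    have ihk := ih (by omega) k
    obtain ⟨h3, heq⟩ := hstep v (by omega)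
    rw [heq]
    simp only [odo_succ]
    by_cases h1 : k = site v - 1
    · rw [if_pos h1, if_pos (by omega), if_neg (by omega), if_neg (by omega)]
      push_cast
      linarith [ihk]
    · rw [if_neg h1]
      by_cases h2 : k = site v + 1
      · rw [if_pos h2, if_neg (by omega), if_pos (by omega), if_neg (by omega)]
        push_cast
        linarith [ihk]
      · rw [if_neg h2]
        by_cases h4 : k = site v
        · rw [if_pos h4, if_neg (by omega), if_neg (by omega), if_pos (by omega),
            Nat.cast_sub (by rw [h4]; omega)]
          push_cast
          linarith [ihk]
        · rw [if_neg h4, if_neg (by omega), if_neg (by omega), if_neg (by omega)]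
          linarith [ihk]

/-- Least action principle: the odometer never exceeds `Uf`. -/
lemma lap (m : ℕ) (hm : 1 ≤ m) (T : ℕ) (cfg : ℕ → ℤ → ℕ) (site : ℕ → ℤ)
    (hinit : cfg 0 = fun j => if j = 0 then 4 * m - 1 else 0)
    (hstep : ∀ u < T, SLoopFire (cfg u) (cfg (u + 1)) (site u)) :
    ∀ v, v ≤ T → ∀ i, odo site v i ≤ Uf m i := by
  have hinitZ : ∀ j : ℤ, (cfg 0 j : ℤ) = (if j = 0 then ((4*m-1 : ℕ) : ℤ) else 0) := by
    intro j
    have := congrFun hinit j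
    rw [this]
    split <;> simp
  intro v
  induction v with
  | zero => intro _ i; simpa [odo] using Uf_nonneg m i
  | succ v ih =>
    intro hv i
    rw [odo_succ]
    by_cases hs : site v = i
    · rw [if_pos hs]
      by_contra hlt
      push_neg at hlt
      have heq : odo site v i = Uf m i := le_antisymm (ih (by omega) i) (by omega)
      have h3 := (hstep v (by omega)).1
      rw [hs] at h3
      have h3' : (3 : ℤ) ≤ (cfg v i : ℤ) := by exact_mod_cast h3
      have hcf := cfg_formula T cfg site hstep v (by omega) i
      rw [hinitZ i] at hcf
      have hkey := key_id m hm i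
      have hp := ih (by omega) (i+1)
      have hq := ih (by omega) (i-1)
      have h2 : (tg m i : ℤ) ≤ 2 := by exact_mod_cast tg_le m i
      linarith
    · rw [if_neg hs]
      simpa using ih (by omega) i

/-- Unlabeled self-loop chip-firing with `4m - 1` chips at the origin: every
complete firing sequence (every site finally holds at most 2 chips) ends at the
configuration with 1 chip at each of `-m`, `0`, `m`, 2 chips at each site `k`
with `1 ≤ |k| ≤ m - 1`, and 0 chips elsewhere. -/
theorem stmt11 (m : ℕ) (hm : 1 ≤ m) (T : ℕ) (cfg : ℕ → ℤ → ℕ) (site : ℕ → ℤ)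
    (hinit : cfg 0 = fun j => if j = 0 then 4 * m - 1 else 0)
    (hstep : ∀ u < T, SLoopFire (cfg u) (cfg (u + 1)) (site u))
    (hcomplete : ∀ i : ℤ, cfg T i ≤ 2) :
    ∀ k : ℤ, cfg T k =
      if k = 0 ∨ k = (m : ℤ) ∨ k = -(m : ℤ) then 1
      else if k.natAbs < m then 2
      else 0 := by
  have hinitZ : ∀ j : ℤ, (cfg 0 j : ℤ) = (if j = 0 then ((4*m-1 : ℕ) : ℤ) else 0) := by
    intro j
    have := congrFun hinit j
    rw [this]
    split <;> simp
  set d : ℤ → ℤ := fun j => Uf m j - odo site T j with hd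
  have hdnn : ∀ j, 0 ≤ d j := fun j => by
    have := lap m hm T cfg site hinit hstep T le_rfl j
    simp only [hd]
    omega
  have hdle : ∀ j, d j ≤ Uf m j := fun j => by
    have := odo_nonneg site T j
    simp only [hd]
    omega
  have hΔ : ∀ j : ℤ, d (j+1) + d (j-1) - 2 * d j = (tg m j : ℤ) - (cfg T j : ℤ) := by
    intro j
    have hcf := cfg_formula T cfg site hstep T le_rfl j
    rw [hinitZ j] at hcf
    have hkey := key_id m hm j
    simp only [hd]
    linarith
  have hsupp : ∀ j : ℤ, m ≤ j.natAbs → d j = 0 := by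
    intro j hj
    have h1 : Uf m j = 0 := Uf_eq_zero m j (by rw [Int.abs_eq_natAbs]; exact_mod_cast hj)
    have h2 := hdnn j
    have h3 := hdle j
    omega
  have hcompleteZ : ∀ j : ℤ, (cfg T j : ℤ) ≤ 2 := by
    intro j; exact_mod_cast hcomplete j
  have hdzero : ∀ j, d j = 0 := by
    by_contra hne
    push_neg at hne
    obtain ⟨k0, hk0⟩ := hne
    have hk0pos : 1 ≤ d k0 := by have := hdnn k0; omega
    set S : Finset ℤ := Finset.Icc (-(m:ℤ)+1) ((m:ℤ)-1) with hS
    have hmemS : ∀ j : ℤ, j ∈ S ↔ (-(m:ℤ)+1 ≤ j ∧ j ≤ (m:ℤ)-1) := by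
      intro j; rw [hS, Finset.mem_Icc]
    have hk0S : k0 ∈ S := by
      rw [hmemS]
      by_contra hc
      exact hk0 (hsupp k0 (by omega))
    obtain ⟨kp, hkpS, hkpmax⟩ := S.exists_max_image d ⟨k0, hk0S⟩
    have hM1 : 1 ≤ d kp := le_trans hk0pos (hkpmax k0 hk0S)
    have hMax : ∀ j, d j ≤ d kp := by
      intro j
      by_cases hj : j ∈ S
      · exact hkpmax j hj
      · rw [hmemS] at hj
        rw [hsupp j (by omega)]
        omega
    set P : Finset ℤ := S.filter (fun j => d j = d kp) with hP
    have hPne : P.Nonempty := ⟨kp, by rw [hP, Finset.mem_filter]; exact ⟨hkpS, rfl⟩⟩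
    set kplus := P.max' hPne with hkplus
    set kminus := P.min' hPne with hkminus
    have hkplusP' : kplus ∈ S ∧ d kplus = d kp := Finset.mem_filter.mp (P.max'_mem hPne)
    have hkminusP' : kminus ∈ S ∧ d kminus = d kp := Finset.mem_filter.mp (P.min'_mem hPne)
    -- any site outside the maximizer set has strictly smaller d
    have hstrict : ∀ j : ℤ, (j ∉ P) → d j ≤ d kp - 1 := by
      intro j hj
      have := hMax j
      rcases eq_or_lt_of_le this with he | hl
      · exfalso
        apply hj
        rw [hP, Finset.mem_filter]
        refine ⟨?_, he⟩
        rw [hmemS]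
        by_contra hc
        have := hsupp j (by omega)
        omega
      · omega
    -- a maximizer with a strictly smaller neighbor must be 0
    have hbig : ∀ j : ℤ, j ∈ S → d j = d kp →
        (d (j+1) ≤ d kp - 1 ∨ d (j-1) ≤ d kp - 1) → j = 0 := by
      intro j hjS hjM hstr
      rw [hmemS] at hjS
      by_contra hj0
      have htg : tg m j = 2 := by
        unfold tg
        rw [if_neg (by omega), if_pos (by omega)]
      have h0 := hΔ j
      rw [htg] at h0
      have h1 := hMax (j+1)
      have h2 := hMax (j-1)
      have hc := hcompleteZ j
      rcases hstr with h | h <;> omega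
    have hplus0 : kplus = 0 := by
      refine hbig kplus hkplusP'.1 hkplusP'.2 (Or.inl ?_)
      apply hstrict
      intro hmem
      have := P.le_max' _ hmem
      rw [← hkplus] at this
      omega
    have hminus0 : kminus = 0 := by
      refine hbig kminus hkminusP'.1 hkminusP'.2 (Or.inr ?_)
      apply hstrict
      intro hmem
      have := P.min'_le _ hmem
      rw [← hkminus] at this
      omega
    -- so 0 is the unique maximizer; both neighbors are strictly smaller
    have hd0 : d 0 = d kp := by rw [← hplus0]; exact hkplusP'.2
    have hn1 : d 1 ≤ d kp - 1 := by
      apply hstrict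
      intro hmem
      have := P.le_max' _ hmem
      rw [← hkplus, hplus0] at this
      omega
    have hn2 : d (-1) ≤ d kp - 1 := by
      apply hstrict
      intro hmem
      have := P.min'_le _ hmem
      rw [← hkminus, hminus0] at this
      omega
    have h0 := hΔ 0
    have htg0 : tg m 0 = 1 := by
      unfold tg
      rw [if_pos (Or.inl rfl)]
    rw [htg0] at h0
    have hc0 := hcompleteZ 0
    have e1 : (0:ℤ) + 1 = 1 := by ring
    have e2 : (0:ℤ) - 1 = -1 := by ring
    rw [e1, e2] at h0
    omega
  intro k
  have hfin : (cfg T k : ℤ) = (tg m k : ℤ) := by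
    have := hΔ k
    rw [hdzero (k+1), hdzero (k-1), hdzero k] at this
    omega
  have : cfg T k = tg m k := by exact_mod_cast hfin
  rw [this]
  rfl
end

section
/- For every m ≥ 1, consider labeled chip-firing on ℤ with the odd number n = 2m+1 of chips carrying distinct integer labels, all initially at site 0. There exists a complete firing sequence whose final configuration is not weakly sorted: there are chips a and b with the label of a less than the label of b but the final position of a strictly greater than the final position of b. -/
namespace Stmt18Aux

variable {ι : Type} [Fintype ι] [DecidableEq ι]

/-- number of chips at site `s` -/
def cnt (c : ι → ℤ) (s : ℤ) : ℕ := (Finset.univ.filter fun x => c x = s).card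

/-- the count transformation of a firing at site `w` -/
def stepT (w : ℤ) (F : ℤ → ℕ) (s : ℤ) : ℕ :=
  if s = w then F s - 2 else if s = w - 1 ∨ s = w + 1 then F s + 1 else F s

/-- reachability by a finite firing sequence -/
def Reaches (label : ι → ℤ) (c c' : ι → ℤ) : Prop :=
  ∃ (T : ℕ) (cfg : ℕ → ι → ℤ) (site : ℕ → ℤ), cfg 0 = c ∧
    (∀ u < T, LMove label (cfg u) (cfg (u + 1)) (site u)) ∧ cfg T = c'

theorem reaches_refl (label : ι → ℤ) (c : ι → ℤ) : Reaches label c c :=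
  ⟨0, fun _ => c, fun _ => 0, rfl, fun u hu => absurd hu (Nat.not_lt_zero u), rfl⟩

theorem reaches_single {label c c' : ι → ℤ} {i : ℤ} (h : LMove label c c' i) :
    Reaches label c c' := by
  refine ⟨1, fun u => if u = 0 then c else c', fun _ => i, rfl, ?_, rfl⟩
  intro u hu
  interval_cases u
  simpa using h

theorem reaches_trans {label c1 c2 c3 : ι → ℤ}
    (h1 : Reaches label c1 c2) (h2 : Reaches label c2 c3) : Reaches label c1 c3 := by
  obtain ⟨T1, f1, s1, h10, h1m, h1T⟩ := h1
  obtain ⟨T2, f2, s2, h20, h2m, h2T⟩ := h2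
  refine ⟨T1 + T2, fun u => if u ≤ T1 then f1 u else f2 (u - T1),
    fun u => if u < T1 then s1 u else s2 (u - T1), by simp [h10], ?_, ?_⟩
  · intro u hu
    by_cases hc : u < T1
    · have h1 : u ≤ T1 := le_of_lt hc
      have h2' : u + 1 ≤ T1 := hc
      simp only [if_pos h1, if_pos h2', if_pos hc]
      exact h1m u hc
    · have hT1 : T1 ≤ u := le_of_not_gt hc
      have hlt : u - T1 < T2 := by omega
      have key : (if u ≤ T1 then f1 u else f2 (u - T1)) = f2 (u - T1) := by
        by_cases he : u ≤ T1
        · have : u = T1 := le_antisymm he hT1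
          subst this
          simp [h1T, h20]
        · simp [he]
      have key2 : (if u + 1 ≤ T1 then f1 (u + 1) else f2 (u + 1 - T1)) = f2 (u - T1 + 1) := by
        have h3 : ¬ (u + 1 ≤ T1) := by omega
        rw [if_neg h3, show u + 1 - T1 = u - T1 + 1 by omega]
      simp only [if_neg hc, key, key2]
      exact h2m (u - T1) hlt
  · by_cases hT2 : T2 = 0
    · subst hT2
      have : T1 + 0 ≤ T1 := by omega
      simp only [Nat.add_zero, if_pos le_rfl, h1T]
      rw [← h2T, h20]
    · have : ¬ (T1 + T2 ≤ T1) := by omega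
      simp only [if_neg this]
      rw [show T1 + T2 - T1 = T2 by omega, h2T]

theorem cnt_expand {c : ι → ℤ} {a b : ι} (hab : a ≠ b) (s : ℤ) :
    cnt c s = (if c a = s then 1 else 0) + ((if c b = s then 1 else 0) +
      ∑ x ∈ (Finset.univ.erase a).erase b, (if c x = s then 1 else 0)) := by
  rw [cnt, Finset.card_filter]
  rw [← Finset.add_sum_erase _ _ (Finset.mem_univ a)]
  rw [← Finset.add_sum_erase _ _ (Finset.mem_erase.mpr ⟨hab.symm, Finset.mem_univ b⟩)]

/-- explicit firing of the pair `(a, b)` at site `w`. -/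
theorem move_pair {label : ι → ℤ} {c : ι → ℤ} {w : ℤ} {a b : ι}
    (hab : a ≠ b) (hl : label a < label b) (hca : c a = w) (hcb : c b = w) :
    ∃ c', LMove label c c' w ∧ c' a = w - 1 ∧ (∀ x, x ≠ a → x ≠ b → c' x = c x) ∧
      ∀ s, cnt c' s = stepT w (cnt c) s := by
  set c' : ι → ℤ := fun x => if x = a then w - 1 else if x = b then w + 1 else c x with hc'
  have ha' : c' a = w - 1 := by simp [hc']
  have hb' : c' b = w + 1 := by simp [hc', hab.symm]
  have hoth : ∀ x, x ≠ a → x ≠ b → c' x = c x := by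
    intro x h1 h2; simp [hc', h1, h2]
  refine ⟨c', ⟨a, b, hab, hl, hca, hcb, ha', hb', hoth⟩, ha', hoth, ?_⟩
  intro s
  simp only [stepT]
  rw [cnt_expand (c := c') hab s, cnt_expand (c := c) hab s]
  have htail : ∑ x ∈ (Finset.univ.erase a).erase b, (if c' x = s then 1 else 0)
      = ∑ x ∈ (Finset.univ.erase a).erase b, (if c x = s then 1 else 0) := by
    refine Finset.sum_congr rfl fun x hx => ?_
    rw [Finset.mem_erase, Finset.mem_erase] at hx
    rw [hoth x hx.2.1 hx.1]
  rw [htail, ha', hb', hca, hcb]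
  split_ifs <;> omega

/-- fire any two chips at a site with at least two chips. -/
theorem move_any {label : ι → ℤ} (hinj : Function.Injective label) {c : ι → ℤ} {w : ℤ}
    (h : 2 ≤ cnt c w) :
    ∃ c', LMove label c c' w ∧ ∀ s, cnt c' s = stepT w (cnt c) s := by
  rw [cnt] at h
  obtain ⟨a, ha, b, hb, hab⟩ := Finset.one_lt_card.mp h
  rw [Finset.mem_filter] at ha hb
  have hll : label a ≠ label b := fun e => hab (hinj e)
  rcases hll.lt_or_gt with hl | hl
  · obtain ⟨c', hm, _, _, hcnt⟩ := move_pair hab hl ha.2 hb.2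
    exact ⟨c', hm, hcnt⟩
  · obtain ⟨c', hm, _, _, hcnt⟩ := move_pair (Ne.symm hab) hl hb.2 ha.2
    exact ⟨c', hm, hcnt⟩

theorem reach_step {label : ι → ℤ} (hinj : Function.Injective label) {c : ι → ℤ} {w : ℤ}
    {F : ℤ → ℕ} (hc : cnt c = F) (h2 : 2 ≤ F w) :
    ∃ c', Reaches label c c' ∧ cnt c' = stepT w F := by
  obtain ⟨c', hm, hcnt⟩ := move_any hinj (c := c) (w := w) (by rw [hc]; exact h2)
  exact ⟨c', reaches_single hm, funext fun s => by rw [hcnt s, hc]⟩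

theorem inj_of_cnt {c : ι → ℤ} (h : ∀ s, cnt c s ≤ 1) : Function.Injective c := by
  intro x y hxy
  by_contra hne
  have hsub : ({x, y} : Finset ι) ⊆ Finset.univ.filter fun z => c z = c x := by
    intro z hz
    rw [Finset.mem_insert, Finset.mem_singleton] at hz
    rcases hz with rfl | rfl <;> simp [hxy]
  have h2 : 2 ≤ cnt c (c x) := by
    have := Finset.card_le_card hsub
    rwa [Finset.card_pair hne] at this
  have := h (c x)
  omega


/-- count profile at a pass boundary: `3 + extras` chips at `0`, singletons at
`±1..±j` and `±(j+2)..±(r+1)`, empty ring at `±(j+1)`. -/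
def pbF (m r j : ℕ) (s : ℤ) : ℕ :=
  if s = 0 then 2*(m-r)+1
  else if s.natAbs ≤ j then 1
  else if s.natAbs = j+1 then 0
  else if s.natAbs ≤ r+1 then 1
  else 0

/-- count profile mid-pass, after the stages at `0, ±1, …, ±i`. -/
def mpF (m r j i : ℕ) (s : ℤ) : ℕ :=
  if s = 0 then (if i = 0 then 2*(m-r)-1 else 2*(m-r)+1)
  else if s.natAbs < i then 1
  else if s.natAbs = i then 0
  else if s.natAbs = i+1 then (if i+1 ≤ j then 2 else 1)
  else if s.natAbs ≤ j then 1
  else if s.natAbs = j+1 then 0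
  else if s.natAbs ≤ r+1 then 1
  else 0

theorem stepT_self (w : ℤ) (F : ℤ → ℕ) : stepT w F w = F w - 2 := by
  rw [stepT, if_pos rfl]

theorem stepT_self' {w s : ℤ} (F : ℤ → ℕ) (h : s = w) : stepT w F s = F s - 2 := by
  rw [stepT, if_pos h]

theorem stepT_left {w s : ℤ} (F : ℤ → ℕ) (h : s = w - 1) : stepT w F s = F s + 1 := by
  rw [stepT, if_neg (by omega), if_pos (Or.inl h)]

theorem stepT_right {w s : ℤ} (F : ℤ → ℕ) (h : s = w + 1) : stepT w F s = F s + 1 := by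
  rw [stepT, if_neg h1', if_pos (Or.inr h)]
where h1' : ¬ s = w := by omega

theorem stepT_far {w s : ℤ} (F : ℤ → ℕ) (h1 : s ≠ w) (h2 : s ≠ w - 1) (h3 : s ≠ w + 1) :
    stepT w F s = F s := by
  rw [stepT, if_neg h1, if_neg (by tauto)]

/-- intermediate count profile within a stage, after the firing at `-(i+1)`
but before the firing at `i+1`. -/
def midF (m r j i : ℕ) (s : ℤ) : ℕ :=
  if s = 0 then (if i = 0 then 2*(m-r) else 2*(m-r)+1)
  else if s = -((i:ℤ)+1) then 0
  else if s = -((i:ℤ)+2) then (if i+2 ≤ j then 2 else 1)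
  else if s = -(i:ℤ) then 1
  else if s.natAbs < i then 1
  else if s.natAbs = i then 0
  else if s.natAbs = i+1 then (if i+1 ≤ j then 2 else 1)
  else if s.natAbs ≤ j then 1
  else if s.natAbs = j+1 then 0
  else if s.natAbs ≤ r+1 then 1
  else 0

theorem A1pos (m r j : ℕ) (hr : r < m) : 2 ≤ pbF m r j 0 := by
  simp [pbF]; omega

set_option maxHeartbeats 4000000 in
theorem A1 (m r j : ℕ) (hr : r < m) (hj : j ≤ r) : stepT 0 (pbF m r j) = mpF m r j 0 := by
  funext s
  by_cases h1 : s = (0:ℤ)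
  · rw [stepT_self' _ h1, pbF, mpF]
    generalize s.natAbs = d
    split_ifs <;> first | contradiction | omega
  · by_cases h2 : s = (0:ℤ) - 1
    · rw [stepT_left _ h2, pbF, mpF]
      generalize hd : s.natAbs = d
      split_ifs <;> first | contradiction | omega
    · by_cases h3 : s = (0:ℤ) + 1
      · rw [stepT_right _ h3, pbF, mpF]
        generalize hd : s.natAbs = d
        split_ifs <;> first | contradiction | omega
      · rw [stepT_far _ h1 h2 h3, pbF, mpF]
        generalize hd : s.natAbs = d
        split_ifs <;> first | contradiction | omega

theorem A2a (m r j i : ℕ) (hij : i < j) : 2 ≤ mpF m r j i (-(i+1 : ℤ)) := by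
  rw [mpF]
  split_ifs <;> first | contradiction | omega

set_option maxHeartbeats 4000000 in
theorem A2b (m r j i : ℕ) (hij : i < j) : 2 ≤ midF m r j i ((i:ℤ)+1) := by
  rw [midF]
  split_ifs <;> first | contradiction | omega

set_option maxHeartbeats 8000000 in
theorem A2x (m r j i : ℕ) (hij : i < j) (hjr : j ≤ r) (hrm : r < m) :
    stepT (-(i+1 : ℤ)) (mpF m r j i) = midF m r j i := by
  funext s
  by_cases h1 : s = -(i+1 : ℤ)
  · rw [stepT_self' _ h1, mpF, midF]
    generalize hd : s.natAbs = d
    split_ifs <;> first | contradiction | omega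
  · by_cases h2 : s = -(i+1 : ℤ) - 1
    · rw [stepT_left _ h2, mpF, midF]
      generalize hd : s.natAbs = d
      split_ifs <;> first | contradiction | omega
    · by_cases h3 : s = -(i+1 : ℤ) + 1
      · rw [stepT_right _ h3, mpF, midF]
        generalize hd : s.natAbs = d
        split_ifs <;> first | contradiction | omega
      · rw [stepT_far _ h1 h2 h3, mpF, midF]
        generalize hd : s.natAbs = d
        split_ifs <;> first | contradiction | omega

set_option maxHeartbeats 8000000 in
theorem A2y (m r j i : ℕ) (hij : i < j) (hjr : j ≤ r) (hrm : r < m) :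
    stepT ((i:ℤ)+1) (midF m r j i) = mpF m r j (i+1) := by
  funext s
  by_cases h1 : s = (i:ℤ)+1
  · rw [stepT_self' _ h1, midF, mpF]
    generalize hd : s.natAbs = d
    split_ifs <;> first | contradiction | omega
  · by_cases h2 : s = (i:ℤ)+1 - 1
    · rw [stepT_left _ h2, midF, mpF]
      generalize hd : s.natAbs = d
      split_ifs <;> first | contradiction | omega
    · by_cases h3 : s = (i:ℤ)+1 + 1
      · rw [stepT_right _ h3, midF, mpF]
        generalize hd : s.natAbs = d
        split_ifs <;> first | contradiction | omega
      · rw [stepT_far _ h1 h2 h3, midF, mpF]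
        generalize hd : s.natAbs = d
        split_ifs <;> first | contradiction | omega

set_option maxHeartbeats 4000000 in
theorem A3 (m r j : ℕ) (hjr : j + 1 ≤ r) : mpF m r (j+1) (j+1) = pbF m r j := by
  funext s
  rw [mpF, pbF]
  generalize hd : s.natAbs = d
  split_ifs <;> first | contradiction | omega

set_option maxHeartbeats 4000000 in
theorem A4 (m r : ℕ) (hrm : r + 1 < m) : stepT 0 (pbF m r 0) = pbF m (r+1) (r+1) := by
  funext s
  by_cases h1 : s = (0:ℤ)
  · rw [stepT_self' _ h1, pbF, pbF]
    generalize s.natAbs = d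
    split_ifs <;> first | contradiction | omega
  · by_cases h2 : s = (0:ℤ) - 1
    · rw [stepT_left _ h2, pbF, pbF]
      generalize hd : s.natAbs = d
      split_ifs <;> first | contradiction | omega
    · by_cases h3 : s = (0:ℤ) + 1
      · rw [stepT_right _ h3, pbF, pbF]
        generalize hd : s.natAbs = d
        split_ifs <;> first | contradiction | omega
      · rw [stepT_far _ h1 h2 h3, pbF, pbF]
        generalize hd : s.natAbs = d
        split_ifs <;> first | contradiction | omega

set_option maxHeartbeats 4000000 in
theorem A5 (m : ℕ) (hm : 1 ≤ m) (s : ℤ) : stepT 0 (pbF m (m-1) 0) s ≤ 1 := by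
  by_cases h1 : s = (0:ℤ)
  · rw [stepT_self' _ h1, pbF]
    split_ifs <;> first | contradiction | omega
  · by_cases h2 : s = (0:ℤ) - 1
    · rw [stepT_left _ h2, pbF]
      split_ifs <;> first | contradiction | omega
    · by_cases h3 : s = (0:ℤ) + 1
      · rw [stepT_right _ h3, pbF]
        split_ifs <;> first | contradiction | omega
      · rw [stepT_far _ h1 h2 h3, pbF]
        split_ifs <;> first | contradiction | omega

end Stmt18Aux

namespace Stmt18Aux

variable {ι : Type} [Fintype ι] [DecidableEq ι]

theorem stage_reach {label : ι → ℤ} (hinj : Function.Injective label)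
    (m r j i : ℕ) (hij : i < j) (hjr : j ≤ r) (hrm : r < m)
    {c : ι → ℤ} (hc : cnt c = mpF m r j i) :
    ∃ c', Reaches label c c' ∧ cnt c' = mpF m r j (i+1) := by
  obtain ⟨c1, h1, hc1⟩ := reach_step hinj hc (A2a m r j i hij)
  rw [A2x m r j i hij hjr hrm] at hc1
  obtain ⟨c2, h2, hc2⟩ := reach_step hinj hc1 (A2b m r j i hij)
  rw [A2y m r j i hij hjr hrm] at hc2
  exact ⟨c2, reaches_trans h1 h2, hc2⟩

theorem stages_reach {label : ι → ℤ} (hinj : Function.Injective label)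
    (m r j : ℕ) (hjr : j ≤ r) (hrm : r < m) :
    ∀ k i, i + k = j → ∀ c : ι → ℤ, cnt c = mpF m r j i →
      ∃ c', Reaches label c c' ∧ cnt c' = mpF m r j j := by
  intro k
  induction k with
  | zero =>
    intro i hi c hc
    exact ⟨c, reaches_refl _ _, by rwa [show i = j by omega] at hc⟩
  | succ k ih =>
    intro i hi c hc
    obtain ⟨c1, h1, hc1⟩ := stage_reach hinj m r j i (by omega) hjr hrm hc
    obtain ⟨c2, h2, hc2⟩ := ih (i+1) (by omega) c1 hc1
    exact ⟨c2, reaches_trans h1 h2, hc2⟩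

theorem pass_reach {label : ι → ℤ} (hinj : Function.Injective label)
    (m r : ℕ) (hrm : r < m) :
    ∀ j, j ≤ r → ∀ c : ι → ℤ, cnt c = pbF m r j →
      ∃ c', Reaches label c c' ∧ cnt c' = pbF m r 0 := by
  intro j
  induction j with
  | zero => exact fun _ c hc => ⟨c, reaches_refl _ _, hc⟩
  | succ j ih =>
    intro hjr c hc
    obtain ⟨c1, h1, hc1⟩ := reach_step hinj hc (A1pos m r (j+1) hrm)
    rw [A1 m r (j+1) hrm hjr] at hc1
    obtain ⟨c2, h2, hc2⟩ := stages_reach hinj m r (j+1) hjr hrm (j+1) 0 (by omega) c1 hc1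
    rw [A3 m r j hjr] at hc2
    obtain ⟨c3, h3, hc3⟩ := ih (by omega) c2 hc2
    exact ⟨c3, reaches_trans h1 (reaches_trans h2 h3), hc3⟩

theorem insert_reach {label : ι → ℤ} (hinj : Function.Injective label)
    (m : ℕ) (hm : 1 ≤ m) :
    ∀ k r, r + k = m - 1 → ∀ c : ι → ℤ, cnt c = pbF m r r →
      ∃ c', Reaches label c c' ∧ cnt c' = pbF m (m-1) 0 := by
  intro k
  induction k with
  | zero =>
    intro r hr c hc
    have hr' : r = m - 1 := by omega
    subst hr'
    exact pass_reach hinj m (m-1) (by omega) (m-1) le_rfl c hc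
  | succ k ih =>
    intro r hr c hc
    obtain ⟨c1, h1, hc1⟩ := pass_reach hinj m r (by omega) r le_rfl c hc
    obtain ⟨c2, h2, hc2⟩ := reach_step hinj hc1 (A1pos m r 0 (by omega))
    rw [A4 m r (by omega)] at hc2
    obtain ⟨c3, h3, hc3⟩ := ih (r+1) (by omega) c2 hc2
    exact ⟨c3, reaches_trans h1 (reaches_trans h2 h3), hc3⟩

theorem start_cnt (m : ℕ) : cnt (fun _ : Fin (2*m+1) => (0:ℤ)) = pbF m 0 0 := by
  funext s
  rw [cnt, pbF]
  by_cases h : s = (0:ℤ)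
  · subst h
    simp
  · rw [if_neg h]
    have : (Finset.univ.filter fun _ : Fin (2*m+1) => (0:ℤ) = s) = ∅ := by
      apply Finset.filter_false_of_mem
      intro x _
      exact fun e => h e.symm
    rw [this]
    simp only [Finset.card_empty]
    split_ifs <;> omega

theorem final_move {label : ι → ℤ} (hinj : Function.Injective label) {m : ℕ} (hm : 1 ≤ m)
    {c : ι → ℤ} (hc : cnt c = pbF m (m-1) 0) :
    ∃ c', Reaches label c c' ∧ Function.Injective c' ∧
      ∃ p q, label p < label q ∧ c' q < c' p := by
  have h0 : pbF m (m-1) 0 (0:ℤ) = 3 := by simp [pbF]; omega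
  have h3 : (Finset.univ.filter fun t => c t = 0).card = 3 := by
    have := congrFun hc 0
    rw [cnt] at this
    rw [this, h0]
  obtain ⟨x, y, z, hxy, hxz, hyz, hS⟩ := Finset.card_eq_three.mp h3
  have hx : c x = 0 := by
    have : x ∈ Finset.univ.filter fun t => c t = 0 := by rw [hS]; simp
    exact (Finset.mem_filter.mp this).2
  have hy : c y = 0 := by
    have : y ∈ Finset.univ.filter fun t => c t = 0 := by rw [hS]; simp
    exact (Finset.mem_filter.mp this).2
  have hz : c z = 0 := by
    have : z ∈ Finset.univ.filter fun t => c t = 0 := by rw [hS]; simp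
    exact (Finset.mem_filter.mp this).2
  have hlxy : label x ≠ label y := fun e => hxy (hinj e)
  have hlxz : label x ≠ label z := fun e => hxz (hinj e)
  have hlyz : label y ≠ label z := fun e => hyz (hinj e)
  obtain ⟨p, q, t, hp0, hq0, ht0, hpq, hqt⟩ :
      ∃ p q t : ι, c p = 0 ∧ c q = 0 ∧ c t = 0 ∧ label p < label q ∧ label q < label t := by
    rcases hlxy.lt_or_gt with h1 | h1 <;> rcases hlxz.lt_or_gt with h2 | h2 <;>
      rcases hlyz.lt_or_gt with h3 | h3
    · exact ⟨x, y, z, hx, hy, hz, h1, h3⟩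
    · exact ⟨x, z, y, hx, hz, hy, h2, h3⟩
    · exact absurd (h2.trans h1) (by omega)
    · exact ⟨z, x, y, hz, hx, hy, h2, h1⟩
    · exact ⟨y, x, z, hy, hx, hz, h1, h2⟩
    · exact absurd (h3.trans h1) (by omega)
    · exact ⟨y, z, x, hy, hz, hx, h3, h2⟩
    · exact ⟨z, y, x, hz, hy, hx, h3, h1⟩
  have hqt' : q ≠ t := fun e => absurd hqt (by rw [e]; exact lt_irrefl _)
  obtain ⟨c', hmv, hq', hoth, hcnt⟩ := move_pair hqt' hqt hq0 ht0
  have hpq' : p ≠ q := fun e => absurd hpq (by rw [e]; exact lt_irrefl _)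
  have hpt' : p ≠ t := fun e => absurd (hpq.trans hqt) (by rw [e]; exact lt_irrefl _)
  refine ⟨c', reaches_single hmv, ?_, p, q, hpq, ?_⟩
  · apply inj_of_cnt
    intro s
    rw [hcnt s, hc]
    exact A5 m hm s
  · have hp' : c' p = 0 := by rw [hoth p hpq' hpt', hp0]
    rw [hp', hq']
    omega

end Stmt18Aux

/-- Non-confluence for an odd number of chips: for every `m ≥ 1` and every
assignment of distinct labels to `2m + 1` chips initially at the origin, there
is a complete firing sequence (no two chips finally share a site) whose final
configuration is not weakly sorted. -/
theorem stmt18 (m : ℕ) (hm : 1 ≤ m)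
    (label : Fin (2 * m + 1) → ℤ) (hinj : Function.Injective label) :
    ∃ (T : ℕ) (cfg : ℕ → Fin (2 * m + 1) → ℤ) (site : ℕ → ℤ),
      (∀ a, cfg 0 a = 0) ∧
      (∀ u < T, LMove label (cfg u) (cfg (u + 1)) (site u)) ∧
      Function.Injective (cfg T) ∧
      ∃ a b, label a < label b ∧ cfg T b < cfg T a := by

  classical
  obtain ⟨cstar, h1, hc1⟩ :=
    Stmt18Aux.insert_reach hinj m hm (m-1) 0 (by omega) _ (Stmt18Aux.start_cnt m)
  obtain ⟨cfin, h2, hinj2, p, q, hpq, hlt⟩ := Stmt18Aux.final_move hinj hm hc1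
  obtain ⟨T, cfg, site, h0, hmv, hT⟩ := Stmt18Aux.reaches_trans h1 h2
  exact ⟨T, cfg, site, fun a => by rw [h0], hmv, by rw [hT]; exact hinj2,
    p, q, hpq, by rw [hT]; exact hlt⟩
end
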